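/- arXiv:2112.07509 — 4 statements merged into one kernel-verified Lean document; each statement's English description precedes it below -/
import Mathlib

section
/- If the sequence rule induced by a relation ▷ is copy-robust, then for every positive integer x and for any two comparable sequences s and s' (such that the relevant pairs are comparable), it holds that (s,x) ▷ s' if and only if s ▷ s'. -/
/-!
Formalization of the ranked-delegation (liquid democracy) setting of
"Liquid Democracy with Ranked Delegations".

Vertices are natural numbers.  An instance carries the vertex set `V`,
the edge set `E`, the distinguished set `C` of casting voters (which have
no outgoing edges), and a rank function such that for every vertex the
ranks of its outgoing edges are exactly `{1, ..., outdeg}`.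
-/

namespace RankedDelegation

/-- A ranked delegation instance `(G, r)`. -/
structure Instance where
  V : Finset ℕ
  E : Finset (ℕ × ℕ)
  C : Finset ℕ
  C_sub : C ⊆ V
  edge_mem : ∀ e ∈ E, e.1 ∈ V ∧ e.2 ∈ V
  C_no_out : ∀ e ∈ E, e.1 ∉ C
  rank : ℕ × ℕ → ℕ
  rank_prop : ∀ v ∈ V,
    (E.filter (fun e => e.1 = v)).image rank =
      Finset.Icc 1 (E.filter (fun e => e.1 = v)).card

/-- A simple path from `v` to a casting voter, represented by its list of
vertices (so it has at least one edge, i.e. at least two vertices). -/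
def IsDelegPath (G : Instance) (v : ℕ) (p : List ℕ) : Prop :=
  2 ≤ p.length ∧ p.head? = some v ∧ p.Nodup ∧
  (∀ e ∈ p.zip p.tail, e ∈ G.E) ∧
  (∃ c ∈ G.C, p.getLast? = some c)

/-- Delegating voters: members of `V` admitting a path to a casting voter.
(Casting voters have no outgoing edges, so they are never `Delegating`.) -/
def Delegating (G : Instance) (v : ℕ) : Prop :=
  v ∈ G.V ∧ ∃ p, IsDelegPath G v p

/-- Isolated voters: neither casting nor delegating. -/
def Isolated (G : Instance) (v : ℕ) : Prop :=
  v ∈ G.V ∧ v ∉ G.C ∧ ¬ Delegating G v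

/-- The rank sequence `s(P)` of a path `P`. -/
def seqOf (G : Instance) (p : List ℕ) : List ℕ :=
  (p.zip p.tail).map G.rank

/-- `S_v`, the set of rank sequences of paths from `v` to casting voters. -/
def Seqs (G : Instance) (v : ℕ) : Set (List ℕ) :=
  {s | ∃ p, IsDelegPath G v p ∧ seqOf G p = s}

/-- Membership in `𝒮`: all entries are positive. -/
def PosSeq (s : List ℕ) : Prop := ∀ x ∈ s, 1 ≤ x

/-- Two sequences are comparable if some instance realizes `S_v = {s, s'}`. -/
def Comparable (s s' : List ℕ) : Prop :=
  ∃ (G : Instance) (v : ℕ), Seqs G v = {s, s'}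

/-- A set of sequences is comparable if its elements are pairwise comparable. -/
def ComparableSet (S : Set (List ℕ)) : Prop := S.Pairwise Comparable

/-- `R` restricted to any comparable subset of `𝒮` is a (strict) linear order. -/
def LinearOnComparable (R : List ℕ → List ℕ → Prop) : Prop :=
  ∀ S : Set (List ℕ), ComparableSet S →
    (∀ s ∈ S, ¬ R s s) ∧
    (∀ s ∈ S, ∀ t ∈ S, ∀ u ∈ S, R s t → R t u → R s u) ∧
    (∀ s ∈ S, ∀ t ∈ S, s ≠ t → R s t ∨ R t s)

/-- `s` is the `R`-maximum (i.e. `R`-best) element of `S`. -/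
def IsMaxOf (R : List ℕ → List ℕ → Prop) (S : Set (List ℕ)) (s : List ℕ) : Prop :=
  s ∈ S ∧ ∀ t ∈ S, t ≠ s → R s t

/-- A delegation rule assigns to every instance and every delegating voter a
path from that voter to a casting voter. -/
structure DelegationRule where
  path : Instance → ℕ → List ℕ
  valid : ∀ G v, Delegating G v → IsDelegPath G v (path G v)

/-- `f` is a sequence rule induced by the relation `R`. -/
def IsSequenceRule (f : DelegationRule) (R : List ℕ → List ℕ → Prop) : Prop :=
  LinearOnComparable R ∧
  ∀ (G : Instance) (v : ℕ), Delegating G v →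
    IsMaxOf R (Seqs G v) (seqOf G (f.path G v))

/-- Confluence: in the union of all selected paths, every delegating voter
has outdegree exactly one. -/
def Confluent (f : DelegationRule) : Prop :=
  ∀ (G : Instance) (v : ℕ), Delegating G v →
    ∃! w : ℕ, ∃ u : ℕ, Delegating G u ∧
      (v, w) ∈ (f.path G u).zip (f.path G u).tail

/-- The (strict) lexicographic order `▷_lex` ("better than"). -/
def lexRel (s s' : List ℕ) : Prop := List.Lex (· < ·) s s'

/-- The order inducing breadth-first delegation: shorter first, ties by lex. -/
def bfdRel (s s' : List ℕ) : Prop :=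
  s.length < s'.length ∨ (s.length = s'.length ∧ lexRel s s')

/-- The order inducing MinSum: smaller sum of ranks first, ties by lex. -/
def minSumRel (s s' : List ℕ) : Prop :=
  s.sum < s'.sum ∨ (s.sum = s'.sum ∧ lexRel s s')

/-- `σ(s)`: the entries of `s` sorted in non-increasing order. -/
def sortDesc (s : List ℕ) : List ℕ := ((s : Multiset ℕ).sort (· ≤ ·)).reverse

/-- The order `▷_σ` inducing Leximax. -/
def leximaxRel (s s' : List ℕ) : Prop :=
  lexRel (sortDesc s) (sortDesc s') ∨ (sortDesc s = sortDesc s' ∧ lexRel s s')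

/-- The set `F` of minimum-rank edges with head in `A` and tail outside `A`. -/
def diffF (G : Instance) (A : Finset ℕ) : Finset (ℕ × ℕ) :=
  G.E.filter (fun e => e.2 ∈ A ∧ e.1 ∉ A ∧
    ∀ e' ∈ G.E, e'.2 ∈ A → e'.1 ∉ A → G.rank e ≤ G.rank e')

/-- The set of assigned voters after `k` rounds of the diffusion process
(initially the casting voters). -/
def diffA (G : Instance) : ℕ → Finset ℕ
  | 0 => G.C
  | k + 1 => diffA G k ∪ (diffF G (diffA G k)).image Prod.fst

/-- `f` is the Diffusion rule: every delegating voter `v` is assigned, at the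
round where it acquires a minimum-rank edge `(v, w)` into the assigned set,
the path consisting of `(v, w)` followed by the path of `w`. -/
def IsDiffusion (f : DelegationRule) : Prop :=
  ∀ (G : Instance) (v : ℕ), Delegating G v →
    ∃ (k : ℕ) (w : ℕ), (v, w) ∈ diffF G (diffA G k) ∧
      ((w ∈ G.C ∧ f.path G v = [v, w]) ∨
       (Delegating G w ∧ f.path G v = v :: f.path G w))

/-- Maximum entry of a sequence (0 for the empty sequence, by convention). -/
def maxR (s : List ℕ) : ℕ := s.foldr max 0

/-- Fuelled version of the diffusion order on sequences without a joint
prefix; the fuel only has to exceed the length of the first argument. -/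
def diffRelAux : ℕ → List ℕ → List ℕ → Prop
  | 0, _, _ => False
  | n + 1, s, s' =>
    maxR s < maxR s' ∨
    (maxR s = maxR s' ∧ s.count (maxR s) < s'.count (maxR s')) ∨
    (maxR s = maxR s' ∧ s.count (maxR s) = s'.count (maxR s') ∧
      (s.takeWhile (fun x => x ≠ maxR s) = [] ∨
        diffRelAux n (s.takeWhile (fun x => x ≠ maxR s))
          (s'.takeWhile (fun x => x ≠ maxR s'))))

/-- The diffusion order `▷_diff` for sequences with no joint prefix. -/
def diffRel0 (s s' : List ℕ) : Prop := diffRelAux (s.length + 1) s s'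

/-- Strip the longest common prefix of two sequences. -/
def stripCP : List ℕ → List ℕ → List ℕ × List ℕ
  | a :: s, b :: s' => if a = b then stripCP s s' else (a :: s, b :: s')
  | s, s' => (s, s')

/-- The diffusion order `▷_diff`. -/
def diffRel (s s' : List ℕ) : Prop :=
  diffRel0 (stripCP s s').1 (stripCP s s').2

/-- The relative voting weight `ω_f(G, r, c)` of a voter `c`. -/
noncomputable def weight (f : DelegationRule) (G : Instance) (c : ℕ) : ℚ :=
  ((Set.ncard {d | Delegating G d ∧ (f.path G d).getLast? = some c} : ℚ) + 1) /
    ((G.C.card : ℚ) + (Set.ncard {d | Delegating G d} : ℚ))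

/-- Guru-participation: deleting the outgoing edges of a delegating voter `v`
(keeping the casting voters unchanged) does not decrease the relative weight
of any casting voter other than `v`'s representative. -/
def GuruParticipation (f : DelegationRule) : Prop :=
  ∀ (G G' : Instance) (v c : ℕ),
    Delegating G v → (f.path G v).getLast? = some c →
    G'.V = G.V → G'.C = G.C → G'.rank = G.rank →
    G'.E = G.E.filter (fun e => e.1 ≠ v) →
    ∀ u ∈ G.C, u ≠ c → weight f G u ≤ weight f G' u

/-- Copy-robustness: if a delegating voter `v` is assigned a path of length
one ending in the casting voter `c`, then turning `v` into a casting voter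
(deleting its outgoing edges) preserves the joint weight of `v` and `c`. -/
def CopyRobust (f : DelegationRule) : Prop :=
  ∀ (G G' : Instance) (v c : ℕ),
    Delegating G v → (f.path G v).length = 2 →
    (f.path G v).getLast? = some c →
    G'.V = G.V → G'.C = insert v G.C → G'.rank = G.rank →
    G'.E = G.E.filter (fun e => e.1 ≠ v) →
    weight f G c = weight f G' c + weight f G' v

/-- A directed cycle through the edge set `B`, given as a nonempty list of
consecutive edges whose last edge returns to the head of the first one. -/
def IsEdgeCycle (B : Finset (ℕ × ℕ)) (l : List (ℕ × ℕ)) : Prop :=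
  l ≠ [] ∧ (∀ e ∈ l, e ∈ B) ∧ List.Chain' (fun e e' => e.2 = e'.1) l ∧
  ∃ e₁ e₂, l.head? = some e₁ ∧ l.getLast? = some e₂ ∧ e₂.2 = e₁.1

def Acyclic (B : Finset (ℕ × ℕ)) : Prop := ¬ ∃ l, IsEdgeCycle B l

/-- Edges of the reduced graph `Ḡ`: edges of `G` between voters of `C ∪ D`. -/
def InReduced (G : Instance) (e : ℕ × ℕ) : Prop :=
  e ∈ G.E ∧ (e.1 ∈ G.C ∨ Delegating G e.1) ∧ (e.2 ∈ G.C ∨ Delegating G e.2)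

/-- A `C`-branching in the reduced graph: an acyclic set of reduced edges in
which every delegating voter has outdegree exactly one. -/
def IsCBranching (G : Instance) (B : Finset (ℕ × ℕ)) : Prop :=
  (∀ e ∈ B, InReduced G e) ∧ Acyclic B ∧
  ∀ v : ℕ, Delegating G v → ∃! w : ℕ, (v, w) ∈ B

/-- The Borda score of a branching: the sum of the ranks of its edges. -/
def score (G : Instance) (B : Finset (ℕ × ℕ)) : ℕ := ∑ e ∈ B, G.rank e

/-- The rank of the (unique) outgoing edge of `v` in `B` (0 if none). -/
def rankOut (G : Instance) (B : Finset (ℕ × ℕ)) (v : ℕ) : ℕ :=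
  ∑ e ∈ B.filter (fun e => e.1 = v), G.rank e

/-- Priority-order tie-breaking: `B` is preferred to `B'` if some (delegating)
voter `v₀` gets a strictly smaller rank in `B`, while all delegating voters
with smaller priority get equal ranks in `B` and `B'`. -/
def PrioPref (G : Instance) (π : ℕ → ℕ) (B B' : Finset (ℕ × ℕ)) : Prop :=
  ∃ v₀ : ℕ, Delegating G v₀ ∧ rankOut G B v₀ < rankOut G B' v₀ ∧
    ∀ v : ℕ, Delegating G v → π v < π v₀ → rankOut G B v = rankOut G B' v

/-- `f` is BordaBranching with priority order `π`: on every instance the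
paths of `f` are read off from a rank-sum-minimal `C`-branching which is
moreover preferred (w.r.t. `π`) to every other minimal `C`-branching. -/
def IsBordaBranching (f : DelegationRule) (π : ℕ → ℕ) : Prop :=
  Function.Injective π ∧
  ∀ G : Instance, ∃ B : Finset (ℕ × ℕ), IsCBranching G B ∧
    (∀ B', IsCBranching G B' → score G B ≤ score G B') ∧
    (∀ B', IsCBranching G B' → score G B' = score G B → B' ≠ B → PrioPref G π B B') ∧
    (∀ v : ℕ, Delegating G v → ∀ e ∈ (f.path G v).zip (f.path G v).tail, e ∈ B)

/-- Weakly lexicographic: on comparable sequences of equal length differing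
only in the last entry, `R` agrees with the lexicographic order. -/
def WeaklyLex (R : List ℕ → List ℕ → Prop) : Prop :=
  ∀ (t : List ℕ) (a b : ℕ), Comparable (t ++ [a]) (t ++ [b]) →
    (R (t ++ [a]) (t ++ [b]) ↔ lexRel (t ++ [a]) (t ++ [b]))

/-- Strongly lexicographic: on comparable sequences of equal length, `R`
agrees with the lexicographic order. -/
def StronglyLex (R : List ℕ → List ℕ → Prop) : Prop :=
  ∀ s s' : List ℕ, Comparable s s' → s.length = s'.length →
    (R s s' ↔ lexRel s s')

/-- Rank-awareness: among comparable sequences, one with a strictly smaller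
maximum entry is preferred. -/
def RankAware (R : List ℕ → List ℕ → Prop) : Prop :=
  ∀ s s' : List ℕ, Comparable s s' → maxR s < maxR s' → R s s'

/-- Two sequences have no joint prefix (their heads differ, if any). -/
def NoJointPrefix (s s' : List ℕ) : Prop :=
  ∀ a : ℕ, ¬ (s.head? = some a ∧ s'.head? = some a)

/-- Truncation: comparisons may be decided on the parts before a dominating
joint entry `x`. -/
def Truncation (R : List ℕ → List ℕ → Prop) : Prop :=
  ∀ s s' t t' : List ℕ, PosSeq s → PosSeq s' → PosSeq t → PosSeq t' →
    Comparable s s' → NoJointPrefix s s' →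
    ∀ x : ℕ, 1 ≤ x → maxR t < x → maxR t' < x →
    R (s ++ x :: t) (s' ++ x :: t') → R s s'

-- ### Part 1: general lemmas

lemma rank_injOn (G : Instance) {w y y' : ℕ} (h1 : (w, y) ∈ G.E) (h2 : (w, y') ∈ G.E)
    (hr : G.rank (w, y) = G.rank (w, y')) : y = y' := by
  have hwV : w ∈ G.V := (G.edge_mem _ h1).1
  have hp := G.rank_prop w hwV
  have hcard : ((G.E.filter (fun e => e.1 = w)).image G.rank).card
      = (G.E.filter (fun e => e.1 = w)).card := by
    rw [hp]; simp
  have hinj := Finset.card_image_iff.mp hcard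
  have m1 : (w, y) ∈ G.E.filter (fun e => e.1 = w) := by simp [h1]
  have m2 : (w, y') ∈ G.E.filter (fun e => e.1 = w) := by simp [h2]
  have h := hinj (Finset.mem_coe.mpr m1) (Finset.mem_coe.mpr m2) hr
  exact (Prod.ext_iff.mp h).2

lemma walk_prefix (G : Instance) : ∀ (p q : List ℕ),
    (∀ e ∈ p.zip p.tail, e ∈ G.E) → (∀ e ∈ q.zip q.tail, e ∈ G.E) →
    p.head? = q.head? → seqOf G p <+: seqOf G q → p <+: q
  | [], q, _, _, _, _ => List.nil_prefix
  | [a], q, _, _, hh, _ => by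
    cases q with
    | nil => simp at hh
    | cons b q' =>
      simp only [List.head?] at hh
      obtain rfl : a = b := by injection hh
      exact ⟨q', rfl⟩
  | a :: b :: p', q, hp, hq, hh, hpre => by
    cases q with
    | nil => simp at hh
    | cons a' q' =>
      simp only [List.head?] at hh
      obtain rfl : a = a' := by injection hh
      cases q' with
      | nil =>
        exfalso
        have : seqOf G (a :: b :: p') = [] := List.prefix_nil.mp (by simpa [seqOf] using hpre)
        simp [seqOf] at this
      | cons b' q'' =>
        have hseq : seqOf G (a :: b :: p') = G.rank (a, b) :: seqOf G (b :: p') := by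
          simp [seqOf]
        have hseq' : seqOf G (a :: b' :: q'') = G.rank (a, b') :: seqOf G (b' :: q'') := by
          simp [seqOf]
        rw [hseq, hseq'] at hpre
        have hrank : G.rank (a, b) = G.rank (a, b') :=
          (List.cons_prefix_cons.mp hpre).1
        have hab : (a, b) ∈ G.E := hp _ (by simp [List.zip_cons_cons])
        have hab' : (a, b') ∈ G.E := hq _ (by simp [List.zip_cons_cons])
        obtain rfl : b = b' := rank_injOn G hab hab' hrank
        have htail : seqOf G (b :: p') <+: seqOf G (b :: q'') := by
          exact (List.cons_prefix_cons.mp hpre).2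
        have ih := walk_prefix G (b :: p') (b :: q'')
          (fun e he => hp e (by simp [List.zip_cons_cons]; right; exact he))
          (fun e he => hq e (by simp [List.zip_cons_cons]; right; exact he))
          rfl htail
        exact (List.cons_prefix_cons).mpr ⟨rfl, ih⟩


lemma junction_mem : ∀ (l1 l2 : List ℕ) (c d : ℕ), l1.getLast? = some c → l2.head? = some d →
    (c, d) ∈ (l1 ++ l2).zip (l1 ++ l2).tail
  | [], _, _, _, h, _ => by simp at h
  | [a], l2, c, d, h1, h2 => by
    obtain rfl : a = c := by simpa using h1
    cases l2 with
    | nil => simp at h2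
    | cons b l2' =>
      obtain rfl : b = d := by simpa using h2
      simp [List.zip_cons_cons]
  | a :: b :: l1', l2, c, d, h1, h2 => by
    have h1' : (b :: l1').getLast? = some c := by
      rwa [List.getLast?_cons_cons] at h1
    have ih := junction_mem (b :: l1') l2 c d h1' h2
    simp only [List.cons_append, List.zip_cons_cons, List.tail]
    exact List.mem_cons_of_mem _ ih

lemma mem_seqs_ne_nil {G : Instance} {v : ℕ} {t : List ℕ} (h : t ∈ Seqs G v) : t ≠ [] := by
  obtain ⟨p, hp, rfl⟩ := h
  obtain ⟨hl, -⟩ := hp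
  cases p with
  | nil => simp at hl
  | cons a q =>
    cases q with
    | nil => simp at hl
    | cons b q' => simp [seqOf]

lemma seqs_prefix_eq {G : Instance} {v : ℕ} {t t' : List ℕ}
    (ht : t ∈ Seqs G v) (ht' : t' ∈ Seqs G v) (hpre : t <+: t') : t = t' := by
  obtain ⟨p, hp, rfl⟩ := ht
  obtain ⟨q, hq, rfl⟩ := ht'
  have hpq : p <+: q :=
    walk_prefix G p q hp.2.2.2.1 hq.2.2.2.1 (hp.2.1.trans hq.2.1.symm) hpre
  obtain ⟨r, rfl⟩ := hpq
  cases r with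
  | nil => simp
  | cons d r' =>
    exfalso
    obtain ⟨c, hcC, hlast⟩ := hp.2.2.2.2
    have hmem := junction_mem p (d :: r') c d hlast rfl
    exact G.C_no_out _ (hq.2.2.2.1 _ hmem) hcC

def cpl : List ℕ → List ℕ → ℕ
  | a :: l, b :: l' => if a = b then cpl l l' + 1 else 0
  | _, _ => 0

lemma cpl_take : ∀ l l' : List ℕ, l.take (cpl l l') = l'.take (cpl l l')
  | [], l' => by cases l' <;> simp [cpl]
  | a :: l, [] => by simp [cpl]
  | a :: l, b :: l' => by
    by_cases h : a = b
    · subst h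
      have e : cpl (a :: l) (a :: l') = cpl l l' + 1 := by simp [cpl]
      rw [e, List.take_succ_cons, List.take_succ_cons, cpl_take l l']
    · simp [cpl, h]

lemma cpl_spec : ∀ l l' : List ℕ, ¬ l <+: l' → ¬ l' <+: l →
    cpl l l' < l.length ∧ cpl l l' < l'.length ∧ l.getD (cpl l l') 0 ≠ l'.getD (cpl l l') 0
  | [], l', h, _ => absurd (List.nil_prefix) h
  | a :: l, [], _, h => absurd (List.nil_prefix) h
  | a :: l, b :: l', h, h' => by
    by_cases hab : a = b
    · subst hab
      have hl : ¬ l <+: l' := fun hc => h (List.cons_prefix_cons.mpr ⟨rfl, hc⟩)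
      have hl' : ¬ l' <+: l := fun hc => h' (List.cons_prefix_cons.mpr ⟨rfl, hc⟩)
      obtain ⟨c1, c2, c3⟩ := cpl_spec l l' hl hl'
      have e : cpl (a :: l) (a :: l') = cpl l l' + 1 := by simp [cpl]
      refine ⟨by simp [e, c1], by simp [e, c2], ?_⟩
      rw [e, List.getD_cons_succ, List.getD_cons_succ]
      exact c3
    · exact ⟨by simp [cpl, hab], by simp [cpl, hab], by simpa [cpl, hab] using hab⟩



-- vertex codes
def Y (i : ℕ) : ℕ := Nat.pair 0 i
def Z (i : ℕ) : ℕ := Nat.pair 1 i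
def Dm (w j : ℕ) : ℕ := Nat.pair 2 (Nat.pair w j)

lemma Y_inj : Function.Injective Y := fun a b h => by simpa [Y, Nat.pair_eq_pair] using h
lemma Z_inj : Function.Injective Z := fun a b h => by simpa [Z, Nat.pair_eq_pair] using h
lemma Y_ne_Z (i j : ℕ) : Y i ≠ Z j := by simp [Y, Z, Nat.pair_eq_pair]
lemma Dm_ne_Y (w j i : ℕ) : Dm w j ≠ Y i := by simp [Dm, Y, Nat.pair_eq_pair]
lemma Dm_ne_Z (w j i : ℕ) : Dm w j ≠ Z i := by simp [Dm, Z, Nat.pair_eq_pair]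

def tgt (t t' : List ℕ) (m : ℕ) (w j : ℕ) : ℕ :=
  if w.unpair.1 = 0 then
    (if w.unpair.2 = m then
      (if j = t.getD m 0 then Y (m+1) else if j = t'.getD m 0 then Z (m+1) else Dm w j)
     else (if j = t.getD w.unpair.2 0 then Y (w.unpair.2 + 1) else Dm w j))
  else (if j = t'.getD w.unpair.2 0 then Z (w.unpair.2 + 1) else Dm w j)

def deg (t t' : List ℕ) (m : ℕ) (w : ℕ) : ℕ :=
  if w.unpair.1 = 0 ∧ w.unpair.2 < t.length then
    (if w.unpair.2 = m then max (t.getD m 0) (t'.getD m 0) else t.getD w.unpair.2 0)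
  else if w.unpair.1 = 1 ∧ m < w.unpair.2 ∧ w.unpair.2 < t'.length then t'.getD w.unpair.2 0
  else 0

def srcs (t t' : List ℕ) (m : ℕ) : Finset ℕ :=
  (Finset.range t.length).image Y ∪ (Finset.Ioo m t'.length).image Z

def ged (t t' : List ℕ) (m : ℕ) : Finset (ℕ × ℕ) :=
  (srcs t t' m).biUnion
    (fun w => (Finset.Icc 1 (deg t t' m w)).image (fun j => (w, tgt t t' m w j)))

def gC (t t' : List ℕ) (C0 : Finset ℕ) : Finset ℕ := {Y t.length, Z t'.length} ∪ C0

section Gadget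

variable (t t' : List ℕ) (m : ℕ)

lemma mem_srcs {w : ℕ} : w ∈ srcs t t' m ↔
    (∃ i < t.length, w = Y i) ∨ (∃ i, m < i ∧ i < t'.length ∧ w = Z i) := by
  simp only [srcs, Finset.mem_union, Finset.mem_image, Finset.mem_range, Finset.mem_Ioo]
  constructor
  · rintro (⟨i, hi, rfl⟩ | ⟨i, ⟨h1, h2⟩, rfl⟩)
    · exact Or.inl ⟨i, hi, rfl⟩
    · exact Or.inr ⟨i, h1, h2, rfl⟩
  · rintro (⟨i, hi, rfl⟩ | ⟨i, h1, h2, rfl⟩)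
    · exact Or.inl ⟨i, hi, rfl⟩
    · exact Or.inr ⟨i, ⟨h1, h2⟩, rfl⟩

lemma tgt_Y_ne {i j : ℕ} (hi : i ≠ m) :
    tgt t t' m (Y i) j = if j = t.getD i 0 then Y (i + 1) else Dm (Y i) j := by
  simp [tgt, Y, Nat.unpair_pair, hi]

lemma tgt_Ym {j : ℕ} :
    tgt t t' m (Y m) j = if j = t.getD m 0 then Y (m + 1)
      else if j = t'.getD m 0 then Z (m + 1) else Dm (Y m) j := by
  simp [tgt, Y, Nat.unpair_pair]

lemma tgt_Z {i j : ℕ} :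
    tgt t t' m (Z i) j = if j = t'.getD i 0 then Z (i + 1) else Dm (Z i) j := by
  simp [tgt, Z, Nat.unpair_pair]

lemma deg_Y_ne {i : ℕ} (hi : i < t.length) (him : i ≠ m) :
    deg t t' m (Y i) = t.getD i 0 := by
  simp [deg, Y, Nat.unpair_pair, hi, him]

lemma deg_Ym (hm : m < t.length) :
    deg t t' m (Y m) = max (t.getD m 0) (t'.getD m 0) := by
  simp [deg, Y, Nat.unpair_pair, hm]

lemma deg_Z {i : ℕ} (h1 : m < i) (h2 : i < t'.length) :
    deg t t' m (Z i) = t'.getD i 0 := by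
  simp [deg, Z, Nat.unpair_pair, h1, h2]

lemma tgt_inj (w : ℕ) : Function.Injective (tgt t t' m w) := by
  intro j j' h
  unfold tgt at h
  split_ifs at h <;>
    simp_all [Y, Z, Dm, Nat.pair_eq_pair]

lemma mem_ged {e : ℕ × ℕ} : e ∈ ged t t' m ↔
    ∃ w ∈ srcs t t' m, ∃ j, 1 ≤ j ∧ j ≤ deg t t' m w ∧ e = (w, tgt t t' m w j) := by
  simp [ged, Finset.mem_biUnion, Finset.mem_image, Finset.mem_Icc, eq_comm]
  constructor
  · rintro ⟨w, hw, j, ⟨h1, h2⟩, rfl⟩; exact ⟨w, hw, j, h1, h2, rfl⟩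
  · rintro ⟨w, hw, j, h1, h2, rfl⟩; exact ⟨w, hw, j, ⟨h1, h2⟩, rfl⟩

lemma ged_filter {w : ℕ} (hw : w ∈ srcs t t' m) :
    (ged t t' m).filter (fun e => e.1 = w)
      = (Finset.Icc 1 (deg t t' m w)).image (fun j => (w, tgt t t' m w j)) := by
  ext e
  simp only [Finset.mem_filter, mem_ged, Finset.mem_image, Finset.mem_Icc]
  constructor
  · rintro ⟨⟨w', hw', j, h1, h2, rfl⟩, hfst⟩
    obtain rfl : w' = w := hfst
    exact ⟨j, ⟨h1, h2⟩, rfl⟩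
  · rintro ⟨j, ⟨h1, h2⟩, rfl⟩
    exact ⟨⟨w, hw, j, h1, h2, rfl⟩, rfl⟩

lemma ged_filter_not {w : ℕ} (hw : w ∉ srcs t t' m) :
    (ged t t' m).filter (fun e => e.1 = w) = ∅ := by
  rw [Finset.filter_eq_empty_iff]
  rintro e he rfl
  obtain ⟨w', hw', j, _, _, rfl⟩ := (mem_ged t t' m).mp he
  exact hw hw'

end Gadget

structure GH (t t' : List ℕ) (m : ℕ) (C0 : Finset ℕ) (rk : ℕ × ℕ → ℕ) : Prop where
  hm : m < t.length
  hm' : m < t'.length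
  hpre : t.take m = t'.take m
  hne : t.getD m 0 ≠ t'.getD m 0
  hpos : ∀ i < t.length, 1 ≤ t.getD i 0
  hpos' : ∀ i < t'.length, 1 ≤ t'.getD i 0
  hC0 : ∀ c ∈ C0, ∃ i, t.length < i ∧ c = Y i
  hrk : ∀ w ∈ srcs t t' m, ∀ j, 1 ≤ j → j ≤ deg t t' m w → rk (w, tgt t t' m w j) = j

section Gadget2

variable {t t' : List ℕ} {m : ℕ} {C0 : Finset ℕ} {rk : ℕ × ℕ → ℕ}

lemma src_not_C (H : GH t t' m C0 rk) {w : ℕ} (hw : w ∈ srcs t t' m) :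
    w ∉ gC t t' C0 := by
  intro hC
  simp only [gC, Finset.mem_union, Finset.mem_insert, Finset.mem_singleton] at hC
  rw [mem_srcs] at hw
  rcases hw with ⟨i, hi, rfl⟩ | ⟨i, hi1, hi2, rfl⟩
  · rcases hC with (h | h) | h
    · exact absurd (Y_inj h) (by omega)
    · exact Y_ne_Z _ _ h
    · obtain ⟨i', hi', heq⟩ := H.hC0 _ h
      have := Y_inj heq; omega
  · rcases hC with (h | h) | h
    · exact Y_ne_Z _ _ h.symm
    · exact absurd (Z_inj h) (by omega)
    · obtain ⟨i', hi', heq⟩ := H.hC0 _ h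
      exact Y_ne_Z _ _ heq.symm

def gadget (t t' : List ℕ) (m : ℕ) (C0 Vx : Finset ℕ) (rk : ℕ × ℕ → ℕ)
    (H : GH t t' m C0 rk) : Instance where
  V := Vx ∪ ((ged t t' m).image Prod.fst ∪ (ged t t' m).image Prod.snd ∪ gC t t' C0)
  E := ged t t' m
  C := gC t t' C0
  C_sub := by intro c hc; simp [hc]
  edge_mem := by
    intro e he
    constructor
    · apply Finset.mem_union_right; apply Finset.mem_union_left
      apply Finset.mem_union_left
      exact Finset.mem_image_of_mem _ he
    · apply Finset.mem_union_right; apply Finset.mem_union_left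
      apply Finset.mem_union_right
      exact Finset.mem_image_of_mem _ he
  C_no_out := by
    intro e he
    obtain ⟨w, hw, j, _, _, rfl⟩ := (mem_ged t t' m).mp he
    exact src_not_C H hw
  rank := rk
  rank_prop := by
    intro v _
    by_cases hv : v ∈ srcs t t' m
    · rw [ged_filter t t' m hv]
      have hcard : ((Finset.Icc 1 (deg t t' m v)).image
          (fun j => (v, tgt t t' m v j))).card = deg t t' m v := by
        rw [Finset.card_image_of_injective _ (fun a b hab => tgt_inj t t' m v (by
          simpa using (Prod.ext_iff.mp hab).2))]
        simp
      rw [hcard, Finset.image_image]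
      rw [show ((fun e : ℕ × ℕ => rk e) ∘ fun j => (v, tgt t t' m v j))
        = fun j => rk (v, tgt t t' m v j) from rfl]
      ext x
      simp only [Finset.mem_image, Finset.mem_Icc]
      constructor
      · rintro ⟨j, ⟨h1, h2⟩, rfl⟩
        rw [H.hrk v hv j h1 h2]; exact ⟨h1, h2⟩
      · rintro ⟨h1, h2⟩
        exact ⟨x, ⟨h1, h2⟩, H.hrk v hv x h1 h2⟩
    · rw [ged_filter_not t t' m hv]; simp

end Gadget2


def chain (v : ℕ → ℕ) (i n : ℕ) : List ℕ := (List.range' i (n + 1)).map v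

lemma chain_zero (v : ℕ → ℕ) (i : ℕ) : chain v i 0 = [v i] := by simp [chain]

lemma chain_succ (v : ℕ → ℕ) (i n : ℕ) : chain v i (n + 1) = v i :: chain v (i + 1) n := by
  simp [chain, List.range'_succ]

lemma chain_ne_nil (v : ℕ → ℕ) (i n : ℕ) : chain v i n ≠ [] := by
  cases n with
  | zero => simp [chain_zero]
  | succ n => simp [chain_succ]

lemma chain_length (v : ℕ → ℕ) (i n : ℕ) : (chain v i n).length = n + 1 := by simp [chain]

lemma chain_head? (v : ℕ → ℕ) (i n : ℕ) : (chain v i n).head? = some (v i) := by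
  cases n with
  | zero => simp [chain_zero]
  | succ n => simp [chain_succ]

lemma chain_getLast? (v : ℕ → ℕ) (i n : ℕ) : (chain v i n).getLast? = some (v (i + n)) := by
  induction n generalizing i with
  | zero => simp [chain_zero]
  | succ n ih =>
    rw [chain_succ, List.getLast?_cons, ih, Option.getD_some]
    congr 2
    omega

lemma chain_nodup {v : ℕ → ℕ} (hv : Function.Injective v) (i n : ℕ) :
    (chain v i n).Nodup := (List.nodup_range' ..).map hv

lemma chain_mem {v : ℕ → ℕ} {w : ℕ} {i n : ℕ} :
    w ∈ chain v i n ↔ ∃ k, i ≤ k ∧ k ≤ i + n ∧ w = v k := by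
  simp only [chain, List.mem_map, List.mem_range'_1]
  constructor
  · rintro ⟨k, ⟨h1, h2⟩, rfl⟩; exact ⟨k, h1, by omega, rfl⟩
  · rintro ⟨k, h1, h2, rfl⟩; exact ⟨k, ⟨h1, by omega⟩, rfl⟩

lemma chain_zip_tail (v : ℕ → ℕ) : ∀ (n i : ℕ),
    (chain v i (n + 1)).zip (chain v i (n + 1)).tail
      = (List.range' i (n + 1)).map (fun k => (v k, v (k + 1)))
  | 0, i => by simp [chain_succ, chain_zero, List.range'_succ]
  | n + 1, i => by
    have h := chain_zip_tail v n (i + 1)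
    rw [chain_succ, chain_succ]
    simp only [List.tail_cons, List.zip_cons_cons]
    rw [List.range'_succ, List.map_cons, ← h]
    rw [chain_succ]
    simp

lemma range'_map_getD (l : List ℕ) : ∀ (n i : ℕ), i + n = l.length →
    (List.range' i n).map (fun k => l.getD k 0) = l.drop i
  | 0, i, h => by
    have : i = l.length := by omega
    subst this
    simp [List.drop_length]
  | n + 1, i, h => by
    have hi : i < l.length := by omega
    rw [List.range'_succ, List.map_cons, range'_map_getD l n (i + 1) (by omega),
      List.drop_eq_getElem_cons hi, List.getD_eq_getElem l 0 hi]




section Paths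

def vB (m k : ℕ) : ℕ := if k ≤ m then Y k else Z k
def pathY (t : List ℕ) (i : ℕ) : List ℕ := chain Y i (t.length - i)
def pathZ (t' : List ℕ) (i : ℕ) : List ℕ := chain Z i (t'.length - i)
def pathB (t' : List ℕ) (m i : ℕ) : List ℕ := chain (vB m) i (t'.length - i)

lemma vB_inj (m : ℕ) : Function.Injective (vB m) := by
  intro a b h
  unfold vB at h
  split_ifs at h
  · exact Y_inj h
  · exact absurd h (Y_ne_Z _ _)
  · exact absurd h.symm (Y_ne_Z _ _)
  · exact Z_inj h

lemma chain_congr {v v' : ℕ → ℕ} (i n : ℕ) (h : ∀ k, i ≤ k → k ≤ i + n → v k = v' k) :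
    chain v i n = chain v' i n := by
  unfold chain
  apply List.map_congr_left
  intro k hk
  rw [List.mem_range'_1] at hk
  exact h k hk.1 (by omega)

variable {t t' : List ℕ} {m : ℕ} {C0 Vx : Finset ℕ} {rk : ℕ × ℕ → ℕ}

lemma hpre' (H : GH t t' m C0 rk) : ∀ k, k < m → t.getD k 0 = t'.getD k 0 := by
  intro k hk
  have h := congrArg (fun l : List ℕ => l.getD k 0) H.hpre
  simpa [List.getD_eq_getElem?_getD, List.getElem?_take, hk] using h

lemma Yk_src {k : ℕ} (hk : k < t.length) : Y k ∈ srcs t t' m :=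
  (mem_srcs t t' m).mpr (Or.inl ⟨k, hk, rfl⟩)

lemma Zk_src {k : ℕ} (h1 : m < k) (h2 : k < t'.length) : Z k ∈ srcs t t' m :=
  (mem_srcs t t' m).mpr (Or.inr ⟨k, h1, h2, rfl⟩)

lemma tgt_Yk {k : ℕ} : tgt t t' m (Y k) (t.getD k 0) = Y (k + 1) := by
  by_cases him : k = m
  · rw [him, tgt_Ym]; simp
  · rw [tgt_Y_ne t t' m him]; simp

lemma deg_Yk (H : GH t t' m C0 rk) {k : ℕ} (hk : k < t.length) :
    t.getD k 0 ≤ deg t t' m (Y k) := by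
  by_cases him : k = m
  · rw [him, deg_Ym _ _ _ H.hm]; exact le_max_left _ _
  · rw [deg_Y_ne t t' m hk him]

lemma edgeY (H : GH t t' m C0 rk) {k : ℕ} (hk : k < t.length) :
    (Y k, Y (k + 1)) ∈ ged t t' m :=
  (mem_ged t t' m).mpr ⟨Y k, Yk_src hk, t.getD k 0, H.hpos k hk, deg_Yk H hk,
    by rw [tgt_Yk]⟩

lemma rkY (H : GH t t' m C0 rk) {k : ℕ} (hk : k < t.length) :
    rk (Y k, Y (k + 1)) = t.getD k 0 := by
  conv_lhs => rw [← tgt_Yk (t := t) (t' := t') (m := m) (k := k)]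
  exact H.hrk _ (Yk_src hk) _ (H.hpos k hk) (deg_Yk H hk)

lemma tgt_Ym_branch (H : GH t t' m C0 rk) : tgt t t' m (Y m) (t'.getD m 0) = Z (m + 1) := by
  rw [tgt_Ym]
  rw [if_neg (fun h => H.hne h.symm), if_pos rfl]

lemma edgeB (H : GH t t' m C0 rk) : (Y m, Z (m + 1)) ∈ ged t t' m :=
  (mem_ged t t' m).mpr ⟨Y m, Yk_src H.hm, t'.getD m 0, H.hpos' m H.hm',
    by rw [deg_Ym t t' m H.hm]; exact le_max_right _ _, by rw [tgt_Ym_branch H]⟩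

lemma rkB (H : GH t t' m C0 rk) : rk (Y m, Z (m + 1)) = t'.getD m 0 := by
  conv_lhs => rw [← tgt_Ym_branch H]
  exact H.hrk _ (Yk_src H.hm) _ (H.hpos' m H.hm')
    (by rw [deg_Ym t t' m H.hm]; exact le_max_right _ _)

lemma tgt_Zk {k : ℕ} : tgt t t' m (Z k) (t'.getD k 0) = Z (k + 1) := by
  rw [tgt_Z]; simp

lemma edgeZ (H : GH t t' m C0 rk) {k : ℕ} (h1 : m < k) (h2 : k < t'.length) :
    (Z k, Z (k + 1)) ∈ ged t t' m :=
  (mem_ged t t' m).mpr ⟨Z k, Zk_src h1 h2, t'.getD k 0, H.hpos' k h2,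
    by rw [deg_Z t t' m h1 h2], by rw [tgt_Zk]⟩

lemma rkZ (H : GH t t' m C0 rk) {k : ℕ} (h1 : m < k) (h2 : k < t'.length) :
    rk (Z k, Z (k + 1)) = t'.getD k 0 := by
  conv_lhs => rw [← tgt_Zk (t := t) (t' := t') (m := m) (k := k)]
  exact H.hrk _ (Zk_src h1 h2) _ (H.hpos' k h2) (by rw [deg_Z t t' m h1 h2])

lemma edgeVB (H : GH t t' m C0 rk) {k : ℕ} (hk : k < t'.length) :
    (vB m k, vB m (k + 1)) ∈ ged t t' m ∧ rk (vB m k, vB m (k + 1)) = t'.getD k 0 := by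
  rcases lt_trichotomy k m with h | h | h
  · have hk' : k < t.length := by have := H.hm; omega
    have e1 : vB m k = Y k := if_pos (by omega)
    have e2 : vB m (k + 1) = Y (k + 1) := if_pos (by omega)
    rw [e1, e2, ← hpre' H k h]
    exact ⟨edgeY H hk', rkY H hk'⟩
  · have e1 : vB m k = Y k := if_pos (le_of_eq h)
    have e2 : vB m (k + 1) = Z (k + 1) := if_neg (by omega)
    rw [e1, e2, h]
    exact ⟨edgeB H, rkB H⟩
  · have e1 : vB m k = Z k := if_neg (by omega)
    have e2 : vB m (k + 1) = Z (k + 1) := if_neg (by omega)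
    rw [e1, e2]
    exact ⟨edgeZ H h hk, rkZ H h hk⟩

end Paths

section Valid

variable {t t' : List ℕ} {m : ℕ} {C0 Vx : Finset ℕ} {rk : ℕ × ℕ → ℕ}

lemma mem_gC {c : ℕ} : c ∈ gC t t' C0 ↔ c = Y t.length ∨ c = Z t'.length ∨ c ∈ C0 := by
  simp [gC, Finset.mem_union, Finset.mem_insert, Finset.mem_singleton, or_assoc]

lemma gadget_C (H : GH t t' m C0 rk) : (gadget t t' m C0 Vx rk H).C = gC t t' C0 := rfl
lemma gadget_E (H : GH t t' m C0 rk) : (gadget t t' m C0 Vx rk H).E = ged t t' m := rfl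
lemma gadget_rank (H : GH t t' m C0 rk) : (gadget t t' m C0 Vx rk H).rank = rk := rfl

lemma pathY_valid (H : GH t t' m C0 rk) {i : ℕ} (hi : i < t.length) :
    IsDelegPath (gadget t t' m C0 Vx rk H) (Y i) (pathY t i) := by
  have hn : t.length - i = (t.length - i - 1) + 1 := by omega
  refine ⟨?_, ?_, ?_, ?_, ?_⟩
  · rw [pathY, chain_length]; omega
  · rw [pathY, chain_head?]
  · exact chain_nodup Y_inj _ _
  · intro e he
    rw [pathY, hn, chain_zip_tail] at he
    obtain ⟨k, hk, rfl⟩ := List.mem_map.mp he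
    rw [List.mem_range'_1] at hk
    exact edgeY H (k := k) (by omega)
  · refine ⟨Y t.length, ?_, ?_⟩
    · rw [gadget_C]; exact mem_gC.mpr (Or.inl rfl)
    · rw [pathY, chain_getLast?, show i + (t.length - i) = t.length from by omega]

lemma pathY_seq (H : GH t t' m C0 rk) {i : ℕ} (hi : i < t.length) :
    seqOf (gadget t t' m C0 Vx rk H) (pathY t i) = t.drop i := by
  have hn : t.length - i = (t.length - i - 1) + 1 := by omega
  unfold seqOf pathY
  rw [hn, chain_zip_tail, List.map_map]
  rw [List.map_congr_left (g := fun k => t.getD k 0) (fun k hk => by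
    rw [List.mem_range'_1] at hk
    exact rkY H (k := k) (by omega))]
  exact range'_map_getD t _ i (by omega)

lemma pathZ_valid (H : GH t t' m C0 rk) {i : ℕ} (h1 : m < i) (h2 : i < t'.length) :
    IsDelegPath (gadget t t' m C0 Vx rk H) (Z i) (pathZ t' i) := by
  have hn : t'.length - i = (t'.length - i - 1) + 1 := by omega
  refine ⟨?_, ?_, ?_, ?_, ?_⟩
  · rw [pathZ, chain_length]; omega
  · rw [pathZ, chain_head?]
  · exact chain_nodup Z_inj _ _
  · intro e he
    rw [pathZ, hn, chain_zip_tail] at he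
    obtain ⟨k, hk, rfl⟩ := List.mem_map.mp he
    rw [List.mem_range'_1] at hk
    exact edgeZ H (by omega) (by omega)
  · refine ⟨Z t'.length, ?_, ?_⟩
    · rw [gadget_C]; exact mem_gC.mpr (Or.inr (Or.inl rfl))
    · rw [pathZ, chain_getLast?, show i + (t'.length - i) = t'.length from by omega]

lemma pathZ_seq (H : GH t t' m C0 rk) {i : ℕ} (h1 : m < i) (h2 : i < t'.length) :
    seqOf (gadget t t' m C0 Vx rk H) (pathZ t' i) = t'.drop i := by
  have hn : t'.length - i = (t'.length - i - 1) + 1 := by omega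
  unfold seqOf pathZ
  rw [hn, chain_zip_tail, List.map_map]
  rw [List.map_congr_left (g := fun k => t'.getD k 0) (fun k hk => by
    rw [List.mem_range'_1] at hk
    exact rkZ H (by omega) (by omega))]
  exact range'_map_getD t' _ i (by omega)

lemma pathB_valid (H : GH t t' m C0 rk) {i : ℕ} (hi : i ≤ m) :
    IsDelegPath (gadget t t' m C0 Vx rk H) (Y i) (pathB t' m i) := by
  have hb := H.hm'
  have hn : t'.length - i = (t'.length - i - 1) + 1 := by omega
  refine ⟨?_, ?_, ?_, ?_, ?_⟩
  · rw [pathB, chain_length]; omega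
  · rw [pathB, chain_head?, show vB m i = Y i from if_pos hi]
  · exact chain_nodup (vB_inj m) _ _
  · intro e he
    rw [pathB, hn, chain_zip_tail] at he
    obtain ⟨k, hk, rfl⟩ := List.mem_map.mp he
    rw [List.mem_range'_1] at hk
    exact (edgeVB H (k := k) (by omega)).1
  · refine ⟨Z t'.length, ?_, ?_⟩
    · rw [gadget_C]; exact mem_gC.mpr (Or.inr (Or.inl rfl))
    · rw [pathB, chain_getLast?, show i + (t'.length - i) = t'.length from by omega,
        show vB m t'.length = Z t'.length from if_neg (by omega)]

lemma pathB_seq (H : GH t t' m C0 rk) {i : ℕ} (hi : i ≤ m) :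
    seqOf (gadget t t' m C0 Vx rk H) (pathB t' m i) = t'.drop i := by
  have hb := H.hm'
  have hn : t'.length - i = (t'.length - i - 1) + 1 := by omega
  unfold seqOf pathB
  rw [hn, chain_zip_tail, List.map_map]
  rw [List.map_congr_left (g := fun k => t'.getD k 0) (fun k hk => by
    rw [List.mem_range'_1] at hk
    exact (edgeVB H (k := k) (by omega)).2)]
  exact range'_map_getD t' _ i (by omega)

lemma classify (H : GH t t' m C0 rk) : ∀ (p : List ℕ) (w : ℕ),
    IsDelegPath (gadget t t' m C0 Vx rk H) w p →
    (∃ i, i < t.length ∧ w = Y i ∧ (p = pathY t i ∨ (i ≤ m ∧ p = pathB t' m i)))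
    ∨ (∃ i, m < i ∧ i < t'.length ∧ w = Z i ∧ p = pathZ t' i)
  | [], w, hp => by simp [IsDelegPath] at hp
  | [v], w, hp => by simp [IsDelegPath] at hp
  | w0 :: y :: rest, w, hp => by
    obtain ⟨hlen, hhead, hnodup, hedges, c, hcC, hlast⟩ := hp
    have e0 : w = w0 := Eq.symm (by simpa using hhead)
    subst e0
    have hedge1 : (w, y) ∈ ged t t' m := hedges (w, y) List.mem_cons_self
    obtain ⟨ws, hws, j, hj1, hj2, heq⟩ := (mem_ged t t' m).mp hedge1
    have e1 : w = ws := congrArg Prod.fst heq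
    subst e1
    have e2 : y = tgt t t' m w j := congrArg Prod.snd heq
    have hsub : rest ≠ [] → IsDelegPath (gadget t t' m C0 Vx rk H) y (y :: rest) := by
      intro hrest
      refine ⟨?_, rfl, hnodup.of_cons, ?_, c, hcC, ?_⟩
      · cases rest with
        | nil => exact absurd rfl hrest
        | cons d r => simp
      · intro e he; exact hedges e (List.mem_cons_of_mem _ he)
      · rwa [List.getLast?_cons_cons] at hlast
    have hlast2 : rest = [] → y ∈ gC t t' C0 := by
      rintro rfl
      have he : y = c := by simpa using hlast
      rw [he]; exact hcC
    have hdm : ∀ wd jd, y ≠ Dm wd jd := by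
      intro wd jd hy
      cases rest with
      | nil =>
        rcases mem_gC.mp (hlast2 rfl) with h | h | h
        · exact Dm_ne_Y _ _ _ (hy ▸ h)
        · exact Dm_ne_Z _ _ _ (hy ▸ h)
        · obtain ⟨i', _, heq'⟩ := H.hC0 _ h
          exact Dm_ne_Y _ _ _ (hy ▸ heq')
      | cons d rest' =>
        have hedge2 : (y, d) ∈ ged t t' m :=
          hedges (y, d) (List.mem_cons_of_mem _ List.mem_cons_self)
        obtain ⟨ws', hws', j', _, _, heq'⟩ := (mem_ged t t' m).mp hedge2
        have ey : y = ws' := congrArg Prod.fst heq'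
        rcases (mem_srcs t t' m).mp hws' with ⟨i', _, hws''⟩ | ⟨i', _, _, hws''⟩
        · exact Dm_ne_Y _ _ _ (hy ▸ (ey.trans hws''))
        · exact Dm_ne_Z _ _ _ (hy ▸ (ey.trans hws''))
    have spine : ∀ i, i < t.length → w = Y i → y = Y (i + 1) →
        (∃ i, i < t.length ∧ w = Y i ∧
          ((w :: y :: rest) = pathY t i ∨ (i ≤ m ∧ (w :: y :: rest) = pathB t' m i)))
        ∨ (∃ i, m < i ∧ i < t'.length ∧ w = Z i ∧ (w :: y :: rest) = pathZ t' i) := by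
      intro i hi hw hy
      subst hy
      cases rest with
      | nil =>
        rcases mem_gC.mp (hlast2 rfl) with h | h | h
        · have hlen' : i + 1 = t.length := Y_inj h
          refine Or.inl ⟨i, hi, hw, Or.inl ?_⟩
          rw [hw, pathY, show t.length - i = 1 from by omega, chain_succ, chain_zero]
        · exact absurd h (Y_ne_Z _ _)
        · obtain ⟨i', hi', heq'⟩ := H.hC0 _ h
          have := Y_inj heq'; omega
      | cons d rest' =>
        have hq := classify H (Y (i + 1) :: d :: rest') (Y (i + 1)) (hsub (by simp))
        rcases hq with ⟨i', hi', hyi, hcase⟩ | ⟨i', _, _, hyi, _⟩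
        · obtain rfl : i' = i + 1 := (Y_inj hyi).symm
          rcases hcase with hq1 | ⟨him', hq2⟩
          · refine Or.inl ⟨i, hi, hw, Or.inl ?_⟩
            rw [hw, pathY, show t.length - i = (t.length - (i + 1)) + 1 from by omega,
              chain_succ]
            exact congrArg (List.cons (Y i)) hq1
          · have hb := H.hm'
            refine Or.inl ⟨i, hi, hw, Or.inr ⟨by omega, ?_⟩⟩
            rw [hw, pathB, show t'.length - i = (t'.length - (i + 1)) + 1 from by omega,
              chain_succ, show vB m i = Y i from if_pos (by omega)]
            exact congrArg (List.cons (Y i)) hq2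
        · exact absurd hyi (Y_ne_Z _ _)
    have branch : ∀ i, i < t.length → i = m → w = Y i → y = Z (m + 1) →
        (∃ i, i < t.length ∧ w = Y i ∧
          ((w :: y :: rest) = pathY t i ∨ (i ≤ m ∧ (w :: y :: rest) = pathB t' m i)))
        ∨ (∃ i, m < i ∧ i < t'.length ∧ w = Z i ∧ (w :: y :: rest) = pathZ t' i) := by
      intro i hi him hw hy
      subst hy
      cases rest with
      | nil =>
        rcases mem_gC.mp (hlast2 rfl) with h | h | h
        · exact absurd h.symm (Y_ne_Z _ _)
        · have hb : m + 1 = t'.length := Z_inj h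
          refine Or.inl ⟨i, hi, hw, Or.inr ⟨le_of_eq him, ?_⟩⟩
          rw [hw, him, pathB, show t'.length - m = 1 from by omega, chain_succ, chain_zero,
            show vB m m = Y m from if_pos le_rfl,
            show vB m (m + 1) = Z (m + 1) from if_neg (by omega)]
        · obtain ⟨i', _, heq'⟩ := H.hC0 _ h
          exact (Y_ne_Z _ _ heq'.symm).elim
      | cons d rest' =>
        have hq := classify H (Z (m + 1) :: d :: rest') (Z (m + 1)) (hsub (by simp))
        rcases hq with ⟨i', _, hyi, _⟩ | ⟨i', hia', hib', hyi, hq2⟩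
        · exact absurd hyi.symm (Y_ne_Z _ _)
        · obtain rfl : i' = m + 1 := (Z_inj hyi).symm
          have hb := H.hm'
          refine Or.inl ⟨i, hi, hw, Or.inr ⟨le_of_eq him, ?_⟩⟩
          rw [hw, him, pathB, show t'.length - m = (t'.length - (m + 1)) + 1 from by omega,
            chain_succ, show vB m m = Y m from if_pos le_rfl,
            chain_congr (m + 1) (t'.length - (m + 1))
              (fun k hk _ => show vB m k = Z k from if_neg (by omega))]
          exact congrArg (List.cons (Y m)) hq2
    have zspine : ∀ i, m < i → i < t'.length → w = Z i → y = Z (i + 1) →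
        (∃ i, i < t.length ∧ w = Y i ∧
          ((w :: y :: rest) = pathY t i ∨ (i ≤ m ∧ (w :: y :: rest) = pathB t' m i)))
        ∨ (∃ i, m < i ∧ i < t'.length ∧ w = Z i ∧ (w :: y :: rest) = pathZ t' i) := by
      intro i hia hib hw hy
      subst hy
      cases rest with
      | nil =>
        rcases mem_gC.mp (hlast2 rfl) with h | h | h
        · exact absurd h.symm (Y_ne_Z _ _)
        · have hlen' : i + 1 = t'.length := Z_inj h
          refine Or.inr ⟨i, hia, hib, hw, ?_⟩
          rw [hw, pathZ, show t'.length - i = 1 from by omega, chain_succ, chain_zero]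
        · obtain ⟨i', _, heq'⟩ := H.hC0 _ h
          exact (Y_ne_Z _ _ heq'.symm).elim
      | cons d rest' =>
        have hq := classify H (Z (i + 1) :: d :: rest') (Z (i + 1)) (hsub (by simp))
        rcases hq with ⟨i', _, hyi, _⟩ | ⟨i', hia', hib', hyi, hq2⟩
        · exact absurd hyi.symm (Y_ne_Z _ _)
        · obtain rfl : i' = i + 1 := (Z_inj hyi).symm
          refine Or.inr ⟨i, hia, hib, hw, ?_⟩
          rw [hw, pathZ, show t'.length - i = (t'.length - (i + 1)) + 1 from by omega,
            chain_succ]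
          exact congrArg (List.cons (Z i)) hq2
    rcases (mem_srcs t t' m).mp hws with ⟨i, hi, hwY⟩ | ⟨i, hia, hib, hwZ⟩
    · by_cases him : i = m
      · rw [hwY, him, tgt_Ym] at e2
        split_ifs at e2 with h1 h2
        · exact spine i hi hwY (by rw [e2, ← him])
        · exact branch i hi him hwY e2
        · exact (hdm _ _ e2).elim
      · rw [hwY, tgt_Y_ne t t' m him] at e2
        split_ifs at e2 with h1
        · exact spine i hi hwY e2
        · exact (hdm _ _ e2).elim
    · rw [hwZ, tgt_Z] at e2
      split_ifs at e2 with h1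
      · exact zspine i hia hib hwZ e2
      · exact (hdm _ _ e2).elim
termination_by p w hp => p.length
decreasing_by all_goals (subst_vars; simp [List.length_cons])

end Valid

section SeqsSec

variable {t t' : List ℕ} {m : ℕ} {C0 Vx : Finset ℕ} {rk : ℕ × ℕ → ℕ}

lemma seqs_Y_le (H : GH t t' m C0 rk) {i : ℕ} (hi : i < t.length) (him : i ≤ m) :
    Seqs (gadget t t' m C0 Vx rk H) (Y i) = {t.drop i, t'.drop i} := by
  ext u
  simp only [Seqs, Set.mem_setOf_eq, Set.mem_insert_iff, Set.mem_singleton_iff]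
  constructor
  · rintro ⟨p, hp, rfl⟩
    rcases classify H p (Y i) hp with ⟨i', hi', hyi, hcase⟩ | ⟨i', _, _, hyi, _⟩
    · obtain rfl : i' = i := (Y_inj hyi).symm
      rcases hcase with rfl | ⟨_, rfl⟩
      · exact Or.inl (pathY_seq H hi)
      · exact Or.inr (pathB_seq H him)
    · exact absurd hyi (Y_ne_Z _ _)
  · rintro (rfl | rfl)
    · exact ⟨pathY t i, pathY_valid H hi, pathY_seq H hi⟩
    · exact ⟨pathB t' m i, pathB_valid H him, pathB_seq H him⟩

lemma seqs_Y_gt (H : GH t t' m C0 rk) {i : ℕ} (hi : i < t.length) (him : m < i) :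
    Seqs (gadget t t' m C0 Vx rk H) (Y i) = {t.drop i} := by
  ext u
  simp only [Seqs, Set.mem_setOf_eq, Set.mem_singleton_iff]
  constructor
  · rintro ⟨p, hp, rfl⟩
    rcases classify H p (Y i) hp with ⟨i', hi', hyi, hcase⟩ | ⟨i', _, _, hyi, _⟩
    · obtain rfl : i' = i := (Y_inj hyi).symm
      rcases hcase with rfl | ⟨him', rfl⟩
      · exact pathY_seq H hi
      · omega
    · exact absurd hyi (Y_ne_Z _ _)
  · rintro rfl
    exact ⟨pathY t i, pathY_valid H hi, pathY_seq H hi⟩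

lemma seqs_Z (H : GH t t' m C0 rk) {i : ℕ} (h1 : m < i) (h2 : i < t'.length) :
    Seqs (gadget t t' m C0 Vx rk H) (Z i) = {t'.drop i} := by
  ext u
  simp only [Seqs, Set.mem_setOf_eq, Set.mem_singleton_iff]
  constructor
  · rintro ⟨p, hp, rfl⟩
    rcases classify H p (Z i) hp with ⟨i', _, hyi, _⟩ | ⟨i', _, _, hyi, rfl⟩
    · exact absurd hyi.symm (Y_ne_Z _ _)
    · obtain rfl : i' = i := (Z_inj hyi).symm
      exact pathZ_seq H h1 h2
  · rintro rfl
    exact ⟨pathZ t' i, pathZ_valid H h1 h2, pathZ_seq H h1 h2⟩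

lemma YinV (H : GH t t' m C0 rk) {i : ℕ} (hi : i < t.length) :
    Y i ∈ (gadget t t' m C0 Vx rk H).V := by
  apply Finset.mem_union_right
  apply Finset.mem_union_left
  apply Finset.mem_union_left
  exact Finset.mem_image_of_mem _ (edgeY H hi)

lemma ZinV (H : GH t t' m C0 rk) {i : ℕ} (h1 : m < i) (h2 : i < t'.length) :
    Z i ∈ (gadget t t' m C0 Vx rk H).V := by
  apply Finset.mem_union_right
  apply Finset.mem_union_left
  apply Finset.mem_union_left
  exact Finset.mem_image_of_mem _ (edgeZ H h1 h2)

lemma deleg_iff (H : GH t t' m C0 rk) {w : ℕ} :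
    Delegating (gadget t t' m C0 Vx rk H) w ↔
      ((∃ i, i < t.length ∧ w = Y i) ∨ (∃ i, m < i ∧ i < t'.length ∧ w = Z i)) := by
  constructor
  · rintro ⟨hV, p, hp⟩
    rcases classify H p w hp with ⟨i, hi, hw, _⟩ | ⟨i, h1, h2, hw, _⟩
    · exact Or.inl ⟨i, hi, hw⟩
    · exact Or.inr ⟨i, h1, h2, hw⟩
  · rintro (⟨i, hi, rfl⟩ | ⟨i, h1, h2, rfl⟩)
    · exact ⟨YinV H hi, pathY t i, pathY_valid H hi⟩
    · exact ⟨ZinV H h1 h2, pathZ t' i, pathZ_valid H h1 h2⟩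

lemma drops_ne (H : GH t t' m C0 rk) {i : ℕ} (him : i ≤ m) : t.drop i ≠ t'.drop i := by
  intro h
  have e := congrArg (fun l : List ℕ => l.getD (m - i) 0) h
  rw [List.getD_eq_getElem?_getD, List.getD_eq_getElem?_getD, List.getElem?_drop,
    List.getElem?_drop, show i + (m - i) = m from by omega] at e
  rw [← List.getD_eq_getElem?_getD, ← List.getD_eq_getElem?_getD] at e
  exact H.hne e

lemma pathY_last {i : ℕ} (hi : i ≤ t.length) :
    (pathY t i).getLast? = some (Y t.length) := by
  rw [pathY, chain_getLast?, show i + (t.length - i) = t.length from by omega]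

lemma pathB_last (H : GH t t' m C0 rk) {i : ℕ} (him : i ≤ m) :
    (pathB t' m i).getLast? = some (Z t'.length) := by
  have := H.hm'
  rw [pathB, chain_getLast?, show i + (t'.length - i) = t'.length from by omega,
    show vB m t'.length = Z t'.length from if_neg (by omega)]

lemma pathZ_last {i : ℕ} (hi : i ≤ t'.length) :
    (pathZ t' i).getLast? = some (Z t'.length) := by
  rw [pathZ, chain_getLast?, show i + (t'.length - i) = t'.length from by omega]

end SeqsSec

section FSec

variable {t t' : List ℕ} {m : ℕ} {C0 Vx : Finset ℕ} {rk : ℕ × ℕ → ℕ}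
variable {f : DelegationRule} {R : List ℕ → List ℕ → Prop}

lemma comp_pair (H : GH t t' m C0 rk) {i : ℕ} (hi : i < t.length) (him : i ≤ m) :
    Comparable (t.drop i) (t'.drop i) :=
  ⟨gadget t t' m C0 ∅ rk H, Y i, seqs_Y_le H hi him⟩

lemma not_both (hf : IsSequenceRule f R) {a b : List ℕ}
    (hc : Comparable a b) (hc' : Comparable b a) (hab : R a b) (hba : R b a) : False := by
  have hcs : ComparableSet {a, b} := by
    intro x hx y hy hxy
    simp only [Set.mem_insert_iff, Set.mem_singleton_iff] at hx hy
    rcases hx with rfl | rfl <;> rcases hy with rfl | rfl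
    · exact absurd rfl hxy
    · exact hc
    · exact hc'
    · exact absurd rfl hxy
  obtain ⟨hirr, htrans, _⟩ := hf.1 {a, b} hcs
  by_cases hab' : a = b
  · exact hirr a (Or.inl rfl) (hab' ▸ hab)
  · exact hirr a (Or.inl rfl)
      (htrans a (Or.inl rfl) b (Or.inr rfl) a (Or.inl rfl) hab hba)

lemma fpath_Y_gt (hf : IsSequenceRule f R) (H : GH t t' m C0 rk) {i : ℕ}
    (hi : i < t.length) (him : m < i) :
    f.path (gadget t t' m C0 Vx rk H) (Y i) = pathY t i := by
  have hd : Delegating (gadget t t' m C0 Vx rk H) (Y i) :=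
    (deleg_iff H).mpr (Or.inl ⟨i, hi, rfl⟩)
  have hvalid := f.valid _ (Y i) hd
  rcases classify H _ _ hvalid with ⟨i', hi', hyi, hcase⟩ | ⟨i', _, _, hyi, _⟩
  · obtain rfl : i' = i := (Y_inj hyi).symm
    rcases hcase with h | ⟨him', _⟩
    · exact h
    · omega
  · exact absurd hyi (Y_ne_Z _ _)

lemma fpath_Z (hf : IsSequenceRule f R) (H : GH t t' m C0 rk) {i : ℕ}
    (h1 : m < i) (h2 : i < t'.length) :
    f.path (gadget t t' m C0 Vx rk H) (Z i) = pathZ t' i := by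
  have hd : Delegating (gadget t t' m C0 Vx rk H) (Z i) :=
    (deleg_iff H).mpr (Or.inr ⟨i, h1, h2, rfl⟩)
  have hvalid := f.valid _ (Z i) hd
  rcases classify H _ _ hvalid with ⟨i', _, hyi, _⟩ | ⟨i', _, _, hyi, h⟩
  · exact absurd hyi.symm (Y_ne_Z _ _)
  · obtain rfl : i' = i := (Z_inj hyi).symm
    exact h

lemma fpath_Y_le (hf : IsSequenceRule f R) (H : GH t t' m C0 rk) {i : ℕ}
    (hi : i < t.length) (him : i ≤ m) :
    (f.path (gadget t t' m C0 Vx rk H) (Y i) = pathY t i ↔ R (t.drop i) (t'.drop i)) := by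
  have hd : Delegating (gadget t t' m C0 Vx rk H) (Y i) :=
    (deleg_iff H).mpr (Or.inl ⟨i, hi, rfl⟩)
  have hvalid := f.valid _ (Y i) hd
  have hmax := hf.2 _ (Y i) hd
  rw [seqs_Y_le H hi him] at hmax
  have hcomp : Comparable (t.drop i) (t'.drop i) := comp_pair H hi him
  have hcomp' : Comparable (t'.drop i) (t.drop i) := by
    refine ⟨gadget t t' m C0 Vx rk H, Y i, ?_⟩
    rw [seqs_Y_le H hi him, Set.pair_comm]
  rcases classify H _ _ hvalid with ⟨i', hi', hyi, hcase⟩ | ⟨i', _, _, hyi, _⟩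
  · obtain rfl : i = i' := Y_inj hyi
    rcases hcase with hY | ⟨_, hB⟩
    · simp only [hY, true_iff]
      have hseq : seqOf (gadget t t' m C0 Vx rk H) (f.path (gadget t t' m C0 Vx rk H) (Y i))
          = t.drop i := by rw [hY]; exact pathY_seq H hi
      rw [hseq] at hmax
      exact hmax.2 (t'.drop i) (Or.inr rfl) (fun h => drops_ne H him h.symm)
    · have hseq : seqOf (gadget t t' m C0 Vx rk H) (f.path (gadget t t' m C0 Vx rk H) (Y i))
          = t'.drop i := by rw [hB]; exact pathB_seq H him
      rw [hseq] at hmax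
      have hR' : R (t'.drop i) (t.drop i) :=
        hmax.2 (t.drop i) (Or.inl rfl) (drops_ne H him)
      constructor
      · intro h
        exfalso
        have : pathY t i = pathB t' m i := h.symm.trans hB
        have := congrArg (seqOf (gadget t t' m C0 Vx rk H)) this
        rw [pathY_seq H hi, pathB_seq H him] at this
        exact drops_ne H him this
      · intro hR
        exact absurd (not_both hf hcomp hcomp' hR hR') (fun h => h)
  · exact absurd hyi (Y_ne_Z _ _)

lemma fpath_last (hf : IsSequenceRule f R) (H : GH t t' m C0 rk) {d : ℕ}
    (hd : Delegating (gadget t t' m C0 Vx rk H) d) :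
    (f.path (gadget t t' m C0 Vx rk H) d).getLast? = some (Y t.length) ∨
    (f.path (gadget t t' m C0 Vx rk H) d).getLast? = some (Z t'.length) := by
  have hvalid := f.valid _ d hd
  rcases classify H _ _ hvalid with ⟨i, hi, _, hcase⟩ | ⟨i, h1, h2, _, h⟩
  · rcases hcase with h | ⟨him, h⟩
    · exact Or.inl (by rw [h, pathY_last (by omega)])
    · exact Or.inr (by rw [h, pathB_last H him])
  · exact Or.inr (by rw [h, pathZ_last (by omega)])

end FSec

section CountSec

variable {t t' : List ℕ} {m : ℕ} {C0 Vx : Finset ℕ} {rk : ℕ × ℕ → ℕ}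
variable {f : DelegationRule} {R : List ℕ → List ℕ → Prop}

lemma ncard_endY (hf : IsSequenceRule f R) (H : GH t t' m C0 rk) :
    {d | Delegating (gadget t t' m C0 Vx rk H) d ∧
        (f.path (gadget t t' m C0 Vx rk H) d).getLast? = some (Y t.length)}.ncard
      = (t.length - m - 1) +
        ((Finset.range (m + 1)).filter
          (fun i => f.path (gadget t t' m C0 Vx rk H) (Y i) = pathY t i)).card := by
  have hm := H.hm
  have hset : {d | Delegating (gadget t t' m C0 Vx rk H) d ∧
      (f.path (gadget t t' m C0 Vx rk H) d).getLast? = some (Y t.length)}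
      = ↑(((Finset.range t.length).filter
          (fun i => f.path (gadget t t' m C0 Vx rk H) (Y i) = pathY t i)).image Y) := by
    ext w
    simp only [Set.mem_setOf_eq, Finset.coe_image, Set.mem_image, Finset.mem_coe,
      Finset.mem_filter, Finset.mem_range]
    constructor
    · rintro ⟨hd, hl⟩
      rcases (deleg_iff H).mp hd with ⟨i, hi, rfl⟩ | ⟨i, h1, h2, rfl⟩
      · refine ⟨i, ⟨hi, ?_⟩, rfl⟩
        rcases classify H _ _ (f.valid _ _ hd) with ⟨i', hi', hyi, hcase⟩ | ⟨i', _, _, hyi, _⟩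
        · obtain rfl : i = i' := Y_inj hyi
          rcases hcase with h | ⟨him, h⟩
          · exact h
          · rw [h, pathB_last H him] at hl
            exact absurd (Option.some.inj hl) (fun hh => Y_ne_Z _ _ hh.symm)
        · exact absurd hyi (Y_ne_Z _ _)
      · exfalso
        rw [fpath_Z hf H h1 h2, pathZ_last (by omega)] at hl
        exact Y_ne_Z _ _ (Option.some.inj hl).symm
    · rintro ⟨i, ⟨hi, hp⟩, rfl⟩
      exact ⟨(deleg_iff H).mpr (Or.inl ⟨i, hi, rfl⟩), by rw [hp, pathY_last (by omega)]⟩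
  rw [hset, Set.ncard_coe_finset, Finset.card_image_of_injective _ Y_inj]
  have hsplit : Finset.range t.length = Finset.range (m + 1) ∪ Finset.Ico (m + 1) t.length := by
    rw [Finset.range_eq_Ico, Finset.range_eq_Ico, Finset.Ico_union_Ico_eq_Ico (by omega) (by omega)]
  have hIco : (Finset.Ico (m + 1) t.length).filter
      (fun i => f.path (gadget t t' m C0 Vx rk H) (Y i) = pathY t i)
      = Finset.Ico (m + 1) t.length :=
    Finset.filter_true_of_mem (fun i hi => by
      rw [Finset.mem_Ico] at hi
      exact fpath_Y_gt hf H (by omega) (by omega))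
  have hdisj : Disjoint ((Finset.range (m + 1)).filter
      (fun i => f.path (gadget t t' m C0 Vx rk H) (Y i) = pathY t i))
      (Finset.Ico (m + 1) t.length) := by
    refine Finset.disjoint_left.mpr ?_
    intro a ha hb
    have h1 := (Finset.mem_filter.mp ha).1
    rw [Finset.mem_range] at h1
    rw [Finset.mem_Ico] at hb
    omega
  rw [hsplit, Finset.filter_union, hIco, Finset.card_union_of_disjoint hdisj, Nat.card_Ico]
  omega

lemma ncard_end_other (hf : IsSequenceRule f R) (H : GH t t' m C0 rk) {c : ℕ}
    (h1 : c ≠ Y t.length) (h2 : c ≠ Z t'.length) :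
    {d | Delegating (gadget t t' m C0 Vx rk H) d ∧
        (f.path (gadget t t' m C0 Vx rk H) d).getLast? = some c}.ncard = 0 := by
  have : {d | Delegating (gadget t t' m C0 Vx rk H) d ∧
      (f.path (gadget t t' m C0 Vx rk H) d).getLast? = some c} = ∅ := by
    ext d
    simp only [Set.mem_setOf_eq, Set.mem_empty_iff_false, iff_false, not_and]
    intro hd hl
    rcases fpath_last hf H hd with h | h <;> rw [h] at hl
    · exact h1 (Option.some.inj hl).symm
    · exact h2 (Option.some.inj hl).symm
  rw [this, Set.ncard_empty]

lemma ncard_deleg (H : GH t t' m C0 rk) :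
    {d | Delegating (gadget t t' m C0 Vx rk H) d}.ncard
      = t.length + (t'.length - m - 1) := by
  have hset : {d | Delegating (gadget t t' m C0 Vx rk H) d}
      = ↑(((Finset.range t.length).image Y) ∪ ((Finset.Ioo m t'.length).image Z)) := by
    ext w
    simp only [Set.mem_setOf_eq, Finset.coe_union, Set.mem_union, Finset.coe_image,
      Set.mem_image, Finset.mem_coe, Finset.mem_range, Finset.mem_Ioo]
    rw [deleg_iff H]
    constructor
    · rintro (⟨i, hi, rfl⟩ | ⟨i, h1, h2, rfl⟩)
      · exact Or.inl ⟨i, hi, rfl⟩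
      · exact Or.inr ⟨i, ⟨h1, h2⟩, rfl⟩
    · rintro (⟨i, hi, rfl⟩ | ⟨i, ⟨h1, h2⟩, rfl⟩)
      · exact Or.inl ⟨i, hi, rfl⟩
      · exact Or.inr ⟨i, h1, h2, rfl⟩
  rw [hset, Set.ncard_coe_finset, Finset.card_union_of_disjoint (by
    rw [Finset.disjoint_left]
    rintro w hw1 hw2
    obtain ⟨i, _, rfl⟩ := Finset.mem_image.mp hw1
    obtain ⟨i', _, heq⟩ := Finset.mem_image.mp hw2
    exact Y_ne_Z _ _ heq.symm),
    Finset.card_image_of_injective _ Y_inj, Finset.card_image_of_injective _ Z_inj,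
    Finset.card_range, Nat.card_Ioo]

end CountSec

section Agree

def grk (t t' : List ℕ) (m : ℕ) : ℕ × ℕ → ℕ := fun e =>
  ((Finset.Icc 1 (deg t t' m e.1)).filter (fun j => tgt t t' m e.1 j = e.2)).sum id

lemma grk_spec (t t' : List ℕ) (m : ℕ) {w : ℕ} (j : ℕ) (h1 : 1 ≤ j) (h2 : j ≤ deg t t' m w) :
    grk t t' m (w, tgt t t' m w j) = j := by
  unfold grk
  have hfil : (Finset.Icc 1 (deg t t' m w)).filter
      (fun j' => tgt t t' m w j' = tgt t t' m w j) = {j} := by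
    ext j'
    simp only [Finset.mem_filter, Finset.mem_Icc, Finset.mem_singleton]
    constructor
    · rintro ⟨_, hj⟩
      exact tgt_inj t t' m w hj
    · rintro rfl
      exact ⟨⟨h1, h2⟩, rfl⟩
  simp only at hfil ⊢
  rw [hfil, Finset.sum_singleton, id]

lemma getD_append_left {l : List ℕ} (x : ℕ) {i : ℕ} (h : i < l.length) :
    (l ++ [x]).getD i 0 = l.getD i 0 := by
  rw [List.getD_eq_getElem?_getD, List.getD_eq_getElem?_getD, List.getElem?_append, if_pos h]

lemma getD_append_last (l : List ℕ) (x : ℕ) : (l ++ [x]).getD l.length 0 = x := by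
  rw [List.getD_eq_getElem?_getD, List.getElem?_append_right le_rfl]
  simp

variable {s s' : List ℕ} {m x : ℕ}

lemma srcs_mono : srcs s s' m ⊆ srcs (s ++ [x]) s' m := by
  intro w hw
  rcases (mem_srcs s s' m).mp hw with ⟨i, hi, rfl⟩ | ⟨i, h1, h2, rfl⟩
  · exact (mem_srcs _ _ _).mpr (Or.inl ⟨i, by simp; omega, rfl⟩)
  · exact (mem_srcs _ _ _).mpr (Or.inr ⟨i, h1, h2, rfl⟩)

lemma deg_agree {w : ℕ} (hw : w ∈ srcs s s' m) (hm : m < s.length) :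
    deg (s ++ [x]) s' m w = deg s s' m w := by
  rcases (mem_srcs s s' m).mp hw with ⟨i, hi, rfl⟩ | ⟨i, h1, h2, rfl⟩
  · by_cases him : i = m
    · rw [him, deg_Ym _ _ _ (by simp; omega), deg_Ym _ _ _ hm, getD_append_left x (by omega)]
    · rw [deg_Y_ne _ _ _ (by simp; omega) him, deg_Y_ne _ _ _ hi him,
        getD_append_left x (by omega)]
  · rw [deg_Z _ _ _ h1 h2, deg_Z _ _ _ h1 h2]

lemma tgt_agree {w : ℕ} (hw : w ∈ srcs s s' m) (hm : m < s.length) (j : ℕ) :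
    tgt (s ++ [x]) s' m w j = tgt s s' m w j := by
  rcases (mem_srcs s s' m).mp hw with ⟨i, hi, rfl⟩ | ⟨i, h1, h2, rfl⟩
  · by_cases him : i = m
    · rw [him, tgt_Ym, tgt_Ym, getD_append_left x (by omega)]
    · rw [tgt_Y_ne _ _ _ him, tgt_Y_ne _ _ _ him, getD_append_left x (by omega)]
  · rw [tgt_Z, tgt_Z]

lemma ged_filter_eq (hm : m < s.length) :
    ged s s' m = (ged (s ++ [x]) s' m).filter (fun e => e.1 ≠ Y s.length) := by
  ext e
  simp only [Finset.mem_filter, mem_ged]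
  constructor
  · rintro ⟨w, hw, j, h1, h2, rfl⟩
    refine ⟨⟨w, srcs_mono hw, j, h1, ?_, ?_⟩, ?_⟩
    · rw [deg_agree hw hm]; exact h2
    · rw [tgt_agree hw hm]
    · rcases (mem_srcs s s' m).mp hw with ⟨i, hi, rfl⟩ | ⟨i, _, _, rfl⟩
      · exact fun h => absurd (Y_inj h) (by omega)
      · exact fun h => Y_ne_Z _ _ h.symm
  · rintro ⟨⟨w, hw, j, h1, h2, rfl⟩, hne⟩
    rcases (mem_srcs (s ++ [x]) s' m).mp hw with ⟨i, hi, rfl⟩ | ⟨i, hia, hib, rfl⟩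
    · have hi2 : i < s.length + 1 := by simpa using hi
      have hi' : i < s.length := by
        rcases Nat.lt_or_ge i s.length with h | h
        · exact h
        · exact absurd (congrArg Y (by omega : i = s.length)) hne
      have hw' : Y i ∈ srcs s s' m := Yk_src hi'
      exact ⟨Y i, hw', j, h1, by rw [← deg_agree hw' hm]; exact h2,
        by rw [← tgt_agree hw' hm]⟩
    · have hw' : Z i ∈ srcs s s' m := Zk_src hia hib
      exact ⟨Z i, hw', j, h1, by rw [← deg_agree hw' hm]; exact h2,
        by rw [← tgt_agree hw' hm]⟩

end Agree

lemma q_lemma (n1 n0 n2 c2 c3 d1 d2 : ℕ) (hd : c3 + d2 = c2 + d1) (hpos : 0 < c2 + d1)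
    (heq : ((n1:ℚ) + 1) / ((c2:ℚ) + (d1:ℚ))
      = ((n0:ℚ) + 1) / ((c3:ℚ) + (d2:ℚ)) + ((n2:ℚ) + 1) / ((c3:ℚ) + (d2:ℚ))) :
    n1 = n0 + n2 + 1 := by
  have hD : ((c3:ℚ) + (d2:ℚ)) = ((c2:ℚ) + (d1:ℚ)) := by
    have h := congrArg (fun n : ℕ => (n : ℚ)) hd
    push_cast at h
    linarith
  have hne : ((c2:ℚ) + (d1:ℚ)) ≠ 0 := by
    have h : ((c2 + d1 : ℕ) : ℚ) > 0 := by exact_mod_cast hpos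
    push_cast at h
    linarith
  rw [hD, ← add_div] at heq
  have h2 := congrArg (fun q : ℚ => q * ((c2:ℚ) + (d1:ℚ))) heq
  simp only [div_mul_cancel₀ _ hne] at h2
  have h3 : (n1:ℚ) = (n0:ℚ) + (n2:ℚ) + 1 := by linarith
  exact_mod_cast h3

lemma mem_pair_left {α : Type*} {a b : α} {S : Set α} (h : S = {a, b}) : a ∈ S := by
  rw [h]; exact Or.inl rfl

lemma mem_pair_right {α : Type*} {a b : α} {S : Set α} (h : S = {a, b}) : b ∈ S := by
  rw [h]; exact Or.inr rfl

theorem copy_robust_suffix_invariant' (f : DelegationRule)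
    (R : List ℕ → List ℕ → Prop) (hf : IsSequenceRule f R)
    (hcr : CopyRobust f) :
    ∀ n (s s' : List ℕ) (x : ℕ), s.length ≤ n → 1 ≤ x → PosSeq s → PosSeq s' →
      Comparable s s' → Comparable (s ++ [x]) s' →
      (R (s ++ [x]) s' ↔ R s s') := by
  intro n
  induction n with
  | zero =>
    intro s s' x hn hx hs hs' hc hcx
    obtain ⟨G, v, hS⟩ := hc
    have hne := mem_seqs_ne_nil (mem_pair_left hS)
    have : s = [] := List.length_eq_zero_iff.mp (Nat.le_zero.mp hn)
    exact absurd this hne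
  | succ n ih =>
    intro s s' x hn hx hs hs' hc hcx
    -- structural facts
    have hss' : s ≠ s' := by
      rintro rfl
      obtain ⟨G, v, hS⟩ := hcx
      have h2 := seqs_prefix_eq (mem_pair_right hS) (mem_pair_left hS)
        (List.prefix_append s [x])
      have := congrArg List.length h2
      simp at this
    have hnp : ¬ s <+: s' := by
      intro h
      obtain ⟨G, v, hS⟩ := hc
      exact hss' (seqs_prefix_eq (mem_pair_left hS) (mem_pair_right hS) h)
    have hnp' : ¬ s' <+: s := by
      intro h
      obtain ⟨G, v, hS⟩ := hc
      exact hss' (seqs_prefix_eq (mem_pair_right hS) (mem_pair_left hS) h).symm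
    obtain ⟨hm1, hm2, hm3⟩ := cpl_spec s s' hnp hnp'
    set m := cpl s s' with hmdef
    have hlen1 : (s ++ [x]).length = s.length + 1 := by simp
    -- the two GH structures
    have H1 : GH (s ++ [x]) s' m ∅ (grk (s ++ [x]) s' m) := by
      refine ⟨by rw [hlen1]; omega, hm2, ?_, ?_, ?_, ?_, ?_, ?_⟩
      · rw [List.take_append_of_le_length (by omega)]
        exact cpl_take s s'
      · rw [getD_append_left x (by omega)]
        exact hm3
      · intro i hi
        rw [hlen1] at hi
        rcases Nat.lt_or_ge i s.length with h | h
        · rw [getD_append_left x h, List.getD_eq_getElem _ _ h]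
          exact hs _ (List.getElem_mem _)
        · rw [show i = s.length from by omega, getD_append_last]
          exact hx
      · intro i hi
        rw [List.getD_eq_getElem _ _ hi]
        exact hs' _ (List.getElem_mem _)
      · intro c hcm
        exact absurd hcm (Finset.notMem_empty c)
      · intro w hw j h1 h2
        exact grk_spec _ _ _ j h1 h2
    have H2 : GH s s' m {Y (s.length + 1)} (grk (s ++ [x]) s' m) := by
      refine ⟨hm1, hm2, cpl_take s s', hm3, ?_, ?_, ?_, ?_⟩
      · intro i hi
        rw [List.getD_eq_getElem _ _ hi]
        exact hs _ (List.getElem_mem _)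
      · intro i hi
        rw [List.getD_eq_getElem _ _ hi]
        exact hs' _ (List.getElem_mem _)
      · intro c hcm
        rw [Finset.mem_singleton] at hcm
        exact ⟨s.length + 1, by omega, hcm⟩
      · intro w hw j h1 h2
        rw [← tgt_agree hw hm1]
        exact grk_spec _ _ _ j h1 (by rw [deg_agree hw hm1]; exact h2)
    set Vx1 := (ged s s' m).image Prod.fst ∪ (ged s s' m).image Prod.snd
        ∪ gC s s' {Y (s.length + 1)} with hVx1def
    set Vx2 := (ged (s ++ [x]) s' m).image Prod.fst ∪ (ged (s ++ [x]) s' m).image Prod.snd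
        ∪ gC (s ++ [x]) s' ∅ with hVx2def
    set G1 := gadget (s ++ [x]) s' m ∅ Vx1 (grk (s ++ [x]) s' m) H1 with hG1def
    set G2 := gadget s s' m {Y (s.length + 1)} Vx2 (grk (s ++ [x]) s' m) H2 with hG2def
    -- apply copy-robustness
    have hu_deleg : Delegating G1 (Y s.length) :=
      (deleg_iff H1).mpr (Or.inl ⟨s.length, by rw [hlen1]; omega, rfl⟩)
    have hu_path : f.path G1 (Y s.length) = pathY (s ++ [x]) s.length :=
      fpath_Y_gt hf H1 (by rw [hlen1]; omega) (by omega)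
    have hu_len : (f.path G1 (Y s.length)).length = 2 := by
      rw [hu_path]
      unfold pathY
      rw [chain_length, hlen1]
      omega
    have hu_last : (f.path G1 (Y s.length)).getLast? = some (Y (s.length + 1)) := by
      rw [hu_path, pathY_last (by rw [hlen1]; omega), hlen1]
    have hV : G2.V = G1.V := by
      rw [hG1def, hG2def]
      exact Finset.union_comm _ _
    have hCeq : G2.C = insert (Y s.length) G1.C := by
      rw [hG1def, hG2def]
      show gC s s' {Y (s.length + 1)} = insert (Y s.length) (gC (s ++ [x]) s' ∅)
      ext c
      simp only [gC, hlen1, Finset.mem_union, Finset.mem_insert, Finset.mem_singleton,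
        Finset.notMem_empty, or_false, Finset.union_empty]
      tauto
    have hrank : G2.rank = G1.rank := rfl
    have hE : G2.E = G1.E.filter (fun e => e.1 ≠ Y s.length) := ged_filter_eq hm1
    have hw := hcr G1 G2 (Y s.length) (Y (s.length + 1)) hu_deleg hu_len hu_last hV hCeq hrank hE
    -- counting
    set P1 := (Finset.range (m + 1)).filter
      (fun i => f.path G1 (Y i) = pathY (s ++ [x]) i) with hP1def
    set P2 := (Finset.range (m + 1)).filter
      (fun i => f.path G2 (Y i) = pathY s i) with hP2def
    have hN1 : {d | Delegating G1 d ∧ (f.path G1 d).getLast? = some (Y (s.length + 1))}.ncard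
        = (s.length + 1 - m - 1) + P1.card := by
      have h := ncard_endY (Vx := Vx1) hf H1
      rw [← hG1def, hlen1] at h
      rw [h, hP1def]
    have hN0 : {d | Delegating G2 d ∧ (f.path G2 d).getLast? = some (Y (s.length + 1))}.ncard
        = 0 := by
      have h := ncard_end_other (Vx := Vx2) hf H2 (c := Y (s.length + 1))
        (fun hh => by have := Y_inj hh; omega) (Y_ne_Z _ _)
      rw [← hG2def] at h
      exact h
    have hN2 : {d | Delegating G2 d ∧ (f.path G2 d).getLast? = some (Y s.length)}.ncard
        = (s.length - m - 1) + P2.card := by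
      have h := ncard_endY (Vx := Vx2) hf H2
      rw [← hG2def] at h
      rw [h, hP2def]
    have hD1 : {d | Delegating G1 d}.ncard = (s.length + 1) + (s'.length - m - 1) := by
      have h := ncard_deleg (Vx := Vx1) H1
      rw [← hG1def, hlen1] at h
      exact h
    have hD2 : {d | Delegating G2 d}.ncard = s.length + (s'.length - m - 1) := by
      have h := ncard_deleg (Vx := Vx2) H2
      rw [← hG2def] at h
      exact h
    have hC1card : G1.C.card = 2 := by
      rw [hG1def]
      show (gC (s ++ [x]) s' ∅).card = 2
      rw [gC, Finset.union_empty, Finset.card_insert_of_notMem (by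
        rw [Finset.mem_singleton]; exact Y_ne_Z _ _), Finset.card_singleton]
    have hC2card : G2.C.card = 3 := by
      rw [hG2def]
      show (gC s s' {Y (s.length + 1)}).card = 3
      have he : gC s s' {Y (s.length + 1)}
          = insert (Y s.length) (insert (Z s'.length) {Y (s.length + 1)}) := by
        ext c; simp only [gC, Finset.mem_union, Finset.mem_insert, Finset.mem_singleton]; tauto
      rw [he, Finset.card_insert_of_notMem (by
          simp only [Finset.mem_insert, Finset.mem_singleton]
          rintro (h | h)
          · exact Y_ne_Z _ _ h
          · exact absurd (Y_inj h) (by omega)),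
        Finset.card_insert_of_notMem (by
          rw [Finset.mem_singleton]
          exact fun h => Y_ne_Z _ _ h.symm),
        Finset.card_singleton]
    simp only [weight] at hw
    rw [hN1, hN0, hN2, hD1, hD2, hC1card, hC2card] at hw
    have hPcard : P1.card = P2.card := by
      have h := q_lemma _ _ _ _ _ _ _ (by omega) (by omega) hw
      omega
    -- membership transfer for 1 ≤ i ≤ m
    have hmem : ∀ i, 1 ≤ i → i ≤ m → (i ∈ P1 ↔ i ∈ P2) := by
      intro i h1i him
      rw [hP1def, hP2def]
      simp only [Finset.mem_filter, Finset.mem_range]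
      have hiff1 : f.path G1 (Y i) = pathY (s ++ [x]) i
          ↔ R ((s ++ [x]).drop i) (s'.drop i) := by
        have h := fpath_Y_le (Vx := Vx1) hf H1 (i := i) (by rw [hlen1]; omega) him
        rw [← hG1def] at h
        exact h
      have hiff2 : f.path G2 (Y i) = pathY s i ↔ R (s.drop i) (s'.drop i) := by
        have h := fpath_Y_le (Vx := Vx2) hf H2 (i := i) (by omega) him
        rw [← hG2def] at h
        exact h
      have hdrop : (s ++ [x]).drop i = s.drop i ++ [x] :=
        List.drop_append_of_le_length (by omega)
      have hIH : R (s.drop i ++ [x]) (s'.drop i) ↔ R (s.drop i) (s'.drop i) := by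
        refine ih (s.drop i) (s'.drop i) x ?_ hx ?_ ?_ ?_ ?_
        · rw [List.length_drop]; omega
        · intro y hy; exact hs y (List.drop_subset _ _ hy)
        · intro y hy; exact hs' y (List.drop_subset _ _ hy)
        · exact comp_pair H2 (by omega) him
        · have h := comp_pair H1 (i := i) (by rw [hlen1]; omega) him
          rwa [hdrop] at h
      rw [hiff1, hiff2, hdrop, hIH]
    -- conclude 0-membership equivalence
    have herase : P1.erase 0 = P2.erase 0 := by
      ext i
      simp only [Finset.mem_erase]
      constructor
      · rintro ⟨hne0, hi⟩
        have hlt : i < m + 1 := by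
          rw [hP1def] at hi
          exact Finset.mem_range.mp (Finset.mem_filter.mp hi).1
        exact ⟨hne0, (hmem i (by omega) (by omega)).mp hi⟩
      · rintro ⟨hne0, hi⟩
        have hlt : i < m + 1 := by
          rw [hP2def] at hi
          exact Finset.mem_range.mp (Finset.mem_filter.mp hi).1
        exact ⟨hne0, (hmem i (by omega) (by omega)).mpr hi⟩
    have h0 : (0 ∈ P1) ↔ (0 ∈ P2) := by
      by_cases h1 : 0 ∈ P1 <;> by_cases h2 : 0 ∈ P2
      · simp [h1, h2]
      · exfalso
        have e1 : (P1.erase 0).card + 1 = P1.card := Finset.card_erase_add_one h1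
        have e2 : P2.erase 0 = P2 := Finset.erase_eq_of_notMem h2
        rw [herase, e2] at e1
        omega
      · exfalso
        have e1 : (P2.erase 0).card + 1 = P2.card := Finset.card_erase_add_one h2
        have e2 : P1.erase 0 = P1 := Finset.erase_eq_of_notMem h1
        rw [← herase, e2] at e1
        omega
      · simp [h1, h2]
    have h0P1 : (0 ∈ P1) ↔ R (s ++ [x]) s' := by
      rw [hP1def]
      simp only [Finset.mem_filter, Finset.mem_range]
      have hiff1 : f.path G1 (Y 0) = pathY (s ++ [x]) 0
          ↔ R ((s ++ [x]).drop 0) (s'.drop 0) := by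
        have h := fpath_Y_le (Vx := Vx1) hf H1 (i := 0) (by rw [hlen1]; omega) (Nat.zero_le m)
        rw [← hG1def] at h
        exact h
      rw [hiff1]
      simp [List.drop_zero]
    have h0P2 : (0 ∈ P2) ↔ R s s' := by
      rw [hP2def]
      simp only [Finset.mem_filter, Finset.mem_range]
      have hiff2 : f.path G2 (Y 0) = pathY s 0 ↔ R (s.drop 0) (s'.drop 0) := by
        have h := fpath_Y_le (Vx := Vx2) hf H2 (i := 0) (by omega) (Nat.zero_le m)
        rw [← hG2def] at h
        exact h
      rw [hiff2]
      simp [List.drop_zero]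
    rw [← h0P1, ← h0P2]
    exact h0

/-- a copy-robust sequence rule ignores suffixes: for comparable
pairs, `(s, x) ▷ s'` iff `s ▷ s'`. -/
theorem copy_robust_suffix_invariant (f : DelegationRule)
    (R : List ℕ → List ℕ → Prop) (hf : IsSequenceRule f R)
    (hcr : CopyRobust f) :
    ∀ x : ℕ, 1 ≤ x → ∀ s s' : List ℕ, PosSeq s → PosSeq s' →
      Comparable s s' → Comparable (s ++ [x]) s' →
      (R (s ++ [x]) s' ↔ R s s') := by
  intro x hx s s' hs hs' hc hcx
  exact copy_robust_suffix_invariant' f R hf hcr s.length s s' x le_rfl hx hs hs' hc hcx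

end RankedDelegation
end

section
/- No sequence rule is both confluent and copy-robust. -/
/-!
Formalization of the ranked-delegation (liquid democracy) setting of
"Liquid Democracy with Ranked Delegations".

Vertices are natural numbers.  An instance carries the vertex set `V`,
the edge set `E`, the distinguished set `C` of casting voters (which have
no outgoing edges), and a rank function such that for every vertex the
ranks of its outgoing edges are exactly `{1, ..., outdeg}`.
-/

namespace RankedDelegation

/-! ### Auxiliary machinery for enumerating delegation paths -/

instance (G : Instance) (v : ℕ) (p : List ℕ) : Decidable (IsDelegPath G v p) :=
  decidable_of_iff (2 ≤ p.length ∧ p.head? = some v ∧ p.Nodup ∧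
    (∀ e ∈ p.zip p.tail, e ∈ G.E) ∧ (∃ c ∈ G.C, p.getLast? = some c)) Iff.rfl

/-- DFS enumeration (with fuel) of all simple edge-progressions from `v`. -/
def pathsAux (E : List (ℕ × ℕ)) : ℕ → List ℕ → ℕ → List (List ℕ)
  | 0, _, _ => []
  | fuel+1, vis, v =>
    (E.filter (fun e => e.1 = v)).flatMap (fun e =>
      if e.2 ∈ vis then []
      else [v, e.2] :: (pathsAux E fuel (e.2 :: vis) e.2).map (fun q => v :: q))

lemma tail_mem_snd : ∀ (p : List ℕ), ∀ x ∈ p.tail, ∃ e ∈ p.zip p.tail, e.2 = x := by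
  intro p
  induction p with
  | nil => intro x hx; simp at hx
  | cons a t ih =>
    intro x hx
    simp only [List.tail_cons] at hx
    match t, hx with
    | b :: t', hx =>
      rcases List.mem_cons.mp hx with rfl | hx'
      · exact ⟨(a, x), by simp [List.zip_cons_cons], rfl⟩
      · obtain ⟨e, he, hee⟩ := ih x (by simpa using hx')
        exact ⟨e, by simp [List.zip_cons_cons]; right; exact he, hee⟩

lemma length_le_of_path (p : List ℕ) (E : List (ℕ × ℕ)) (hnd : p.Nodup)
    (he : ∀ e ∈ p.zip p.tail, e ∈ E) : p.length ≤ E.length + 1 := by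
  have hsub : p.tail ⊆ E.map Prod.snd := by
    intro x hx
    obtain ⟨e, he', rfl⟩ := tail_mem_snd p x hx
    exact List.mem_map_of_mem (f := Prod.snd) (he e he')
  have hndt : p.tail.Nodup := (List.tail_sublist p).nodup hnd
  have h1 : p.tail.length ≤ (E.map Prod.snd).length :=
    (hndt.subperm hsub).length_le
  have h2 : p.length ≤ p.tail.length + 1 := by cases p <;> simp
  simpa using h2.trans (by simpa using Nat.add_le_add_right h1 1)

lemma mem_pathsAux (E : List (ℕ × ℕ)) :
    ∀ (fuel : ℕ) (p : List ℕ) (v : ℕ) (vis : List ℕ),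
      p.head? = some v → 2 ≤ p.length → p.Nodup →
      (∀ e ∈ p.zip p.tail, e ∈ E) → (∀ x ∈ p.tail, x ∉ vis) →
      p.length ≤ fuel + 1 → p ∈ pathsAux E fuel vis v := by
  intro fuel
  induction fuel with
  | zero =>
    intro p v vis _ hl _ _ _ h6
    omega
  | succ n ih =>
    intro p v vis hh hl hnd he hvis hle
    match p, hh with
    | a :: b :: t, hh =>
      have ha : a = v := by simpa using hh
      subst ha
      have heb : (a, b) ∈ E := he (a, b) (by simp [List.zip_cons_cons])
      have hbvis : b ∉ vis := hvis b (by simp)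
      rw [pathsAux]
      apply List.mem_flatMap.mpr
      refine ⟨(a, b), List.mem_filter.mpr ⟨heb, by simp⟩, ?_⟩
      rw [if_neg hbvis]
      match t with
      | [] => simp
      | c :: t' =>
        apply List.mem_cons.mpr; right
        apply List.mem_map.mpr
        refine ⟨b :: c :: t', ?_, rfl⟩
        apply ih
        · rfl
        · simp
        · exact hnd.of_cons
        · intro e hee
          apply he e
          simp only [List.zip_cons_cons, List.tail_cons] at hee ⊢
          exact List.mem_cons.mpr (Or.inr hee)
        · intro x hx
          simp only [List.tail_cons] at hx
          intro hxin
          rcases List.mem_cons.mp hxin with rfl | hxv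
          · exact (List.nodup_cons.mp hnd.of_cons).1 hx
          · exact hvis x (by simp [hx]) hxv
        · simp at hle ⊢; omega

lemma delegPath_mem (G : Instance) (EL : List (ℕ × ℕ)) (fuel : ℕ)
    (hE : ∀ e ∈ G.E, e ∈ EL) (hfuel : EL.length ≤ fuel)
    {v : ℕ} {p : List ℕ} (h : IsDelegPath G v p) :
    p ∈ pathsAux EL fuel [v] v := by
  obtain ⟨hl, hh, hnd, he, -⟩ := h
  apply mem_pathsAux EL fuel p v [v] hh hl hnd (fun e he' => hE e (he e he'))
  · intro x hx
    match p, hh with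
    | a :: t, hh =>
      have : a = v := by simpa using hh
      subst this
      simp only [List.tail_cons] at hx
      simp only [List.mem_singleton]
      rintro rfl
      exact (List.nodup_cons.mp hnd).1 hx
  · exact (length_le_of_path p EL hnd (fun e he' => hE e (he e he'))).trans
      (Nat.add_le_add_right hfuel 1)

lemma not_isDelegPath_of_no_out (G : Instance) (v : ℕ)
    (h : ∀ e ∈ G.E, e.1 ≠ v) (p : List ℕ) : ¬ IsDelegPath G v p := by
  rintro ⟨hl, hh, -, he, -⟩
  match p, hh with
  | a :: b :: t, hh =>
    have : a = v := by simpa using hh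
    subst this
    exact h (a, b) (he (a, b) (by simp [List.zip_cons_cons])) rfl
  | [a], hh => simp at hl
  | [], hh => simp at hh

/-! ### Order helpers -/

lemma comparable_symm {s t : List ℕ} (h : Comparable s t) : Comparable t s := by
  obtain ⟨G, v, hG⟩ := h
  exact ⟨G, v, by rw [hG, Set.pair_comm]⟩

lemma pair_comparableSet {s t : List ℕ} (h : Comparable s t) :
    ComparableSet {s, t} := by
  intro a ha b hb hne
  rcases ha with rfl | ha <;> rcases hb with rfl | hb
  · exact absurd rfl hne
  · rcases hb with rfl; exact h
  · rcases ha with rfl; exact comparable_symm h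
  · rcases ha with rfl; rcases hb with rfl; exact absurd rfl hne

lemma asymR {R : List ℕ → List ℕ → Prop} (hlin : LinearOnComparable R)
    {s t : List ℕ} (hc : Comparable s t) (h1 : R s t) (h2 : R t s) : False := by
  obtain ⟨hirr, htr, -⟩ := hlin {s, t} (pair_comparableSet hc)
  exact hirr s (Or.inl rfl) (htr s (Or.inl rfl) t (Or.inr rfl) s (Or.inl rfl) h1 h2)

lemma totalR {R : List ℕ → List ℕ → Prop} (hlin : LinearOnComparable R)
    {s t : List ℕ} (hc : Comparable s t) (hne : s ≠ t) : R s t ∨ R t s :=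
  (hlin {s, t} (pair_comparableSet hc)).2.2 s (Or.inl rfl) t (Or.inr rfl) hne

lemma weight_eq (f : DelegationRule) (G : Instance) (c : ℕ) (A D : Finset ℕ)
    (hA : {d | Delegating G d ∧ (f.path G d).getLast? = some c} = ↑A)
    (hD : {d | Delegating G d} = ↑D) :
    weight f G c = ((A.card : ℚ) + 1) / ((G.C.card : ℚ) + (D.card : ℚ)) := by
  unfold weight
  rw [hA, hD, Set.ncard_coe_finset, Set.ncard_coe_finset]
/-! ### Concrete instances -/

def P0 : Instance where
  V := {0, 1, 2}
  E := {(0, 1), (0, 2)}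
  C := {1, 2}
  C_sub := by decide
  edge_mem := by decide
  C_no_out := by decide
  rank := fun e => if e = (0, 1) then 1 else 2
  rank_prop := by decide

def K1 : Instance where
  V := {0, 1, 2, 3}
  E := {(0, 1), (0, 3), (1, 0), (1, 2)}
  C := {2, 3}
  C_sub := by decide
  edge_mem := by decide
  C_no_out := by decide
  rank := fun e => if e = (0, 3) ∨ e = (1, 2) then 2 else 1
  rank_prop := by decide

def K2 : Instance where
  V := {0, 1, 2, 3}
  E := {(0, 1), (0, 3), (1, 0), (1, 2)}
  C := {2, 3}
  C_sub := by decide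
  edge_mem := by decide
  C_no_out := by decide
  rank := fun e => if e = (0, 3) ∨ e = (1, 2) then 1 else 2
  rank_prop := by decide

def W : Instance where
  V := {0, 1, 2, 3, 4, 5, 6}
  E := {(1, 2), (1, 4), (2, 3), (2, 5), (0, 1), (0, 6)}
  C := {4, 5, 6}
  C_sub := by decide
  edge_mem := by decide
  C_no_out := by decide
  rank := fun e => if e = (1, 4) ∨ e = (2, 5) ∨ e = (0, 6) then 2 else 1
  rank_prop := by decide

def W' : Instance where
  V := {0, 1, 2, 3, 4, 5, 6}
  E := {(2, 3), (2, 5), (0, 1), (0, 6)}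
  C := {1, 4, 5, 6}
  C_sub := by decide
  edge_mem := by decide
  C_no_out := by decide
  rank := fun e => if e = (1, 4) ∨ e = (2, 5) ∨ e = (0, 6) then 2 else 1
  rank_prop := by decide

def U : Instance where
  V := {0, 1, 2, 3}
  E := {(1, 2), (0, 3), (0, 1)}
  C := {2, 3}
  C_sub := by decide
  edge_mem := by decide
  C_no_out := by decide
  rank := fun e => if e = (0, 1) then 2 else 1
  rank_prop := by decide

def U' : Instance where
  V := {0, 1, 2, 3}
  E := {(0, 3), (0, 1)}
  C := {1, 2, 3}
  C_sub := by decide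
  edge_mem := by decide
  C_no_out := by decide
  rank := fun e => if e = (0, 1) then 2 else 1
  rank_prop := by decide

/-! ### Path characterizations -/

lemma P0_path0 {p : List ℕ} (h : IsDelegPath P0 0 p) : p = [0,1] ∨ p = [0,2] := by
  have hm := delegPath_mem P0 [(0,1),(0,2)] 2 (by decide) (by decide) h
  rw [show pathsAux [(0,1),(0,2)] 2 [0] 0 = [[0,1],[0,2]] from by decide] at hm
  simpa using hm

lemma K1_path0 {p : List ℕ} (h : IsDelegPath K1 0 p) : p = [0,1,2] ∨ p = [0,3] := by
  have hm := delegPath_mem K1 [(0,1),(0,3),(1,0),(1,2)] 4 (by decide) (by decide) h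
  rw [show pathsAux [(0,1),(0,3),(1,0),(1,2)] 4 [0] 0 = [[0,1],[0,1,2],[0,3]]
    from by decide] at hm
  simp at hm
  rcases hm with rfl | rfl | rfl
  · exact absurd h.2.2.2.2 (by decide)
  · exact Or.inl rfl
  · exact Or.inr rfl

lemma K1_path1 {p : List ℕ} (h : IsDelegPath K1 1 p) : p = [1,0,3] ∨ p = [1,2] := by
  have hm := delegPath_mem K1 [(0,1),(0,3),(1,0),(1,2)] 4 (by decide) (by decide) h
  rw [show pathsAux [(0,1),(0,3),(1,0),(1,2)] 4 [1] 1 = [[1,0],[1,0,3],[1,2]]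
    from by decide] at hm
  simp at hm
  rcases hm with rfl | rfl | rfl
  · exact absurd h.2.2.2.2 (by decide)
  · exact Or.inl rfl
  · exact Or.inr rfl

lemma K2_path0 {p : List ℕ} (h : IsDelegPath K2 0 p) : p = [0,1,2] ∨ p = [0,3] := by
  have hm := delegPath_mem K2 [(0,1),(0,3),(1,0),(1,2)] 4 (by decide) (by decide) h
  rw [show pathsAux [(0,1),(0,3),(1,0),(1,2)] 4 [0] 0 = [[0,1],[0,1,2],[0,3]]
    from by decide] at hm
  simp at hm
  rcases hm with rfl | rfl | rfl
  · exact absurd h.2.2.2.2 (by decide)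
  · exact Or.inl rfl
  · exact Or.inr rfl

lemma K2_path1 {p : List ℕ} (h : IsDelegPath K2 1 p) : p = [1,0,3] ∨ p = [1,2] := by
  have hm := delegPath_mem K2 [(0,1),(0,3),(1,0),(1,2)] 4 (by decide) (by decide) h
  rw [show pathsAux [(0,1),(0,3),(1,0),(1,2)] 4 [1] 1 = [[1,0],[1,0,3],[1,2]]
    from by decide] at hm
  simp at hm
  rcases hm with rfl | rfl | rfl
  · exact absurd h.2.2.2.2 (by decide)
  · exact Or.inl rfl
  · exact Or.inr rfl

lemma W_path0 {p : List ℕ} (h : IsDelegPath W 0 p) :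
    p = [0,1,2,5] ∨ p = [0,1,4] ∨ p = [0,6] := by
  have hm := delegPath_mem W [(1,2),(1,4),(2,3),(2,5),(0,1),(0,6)] 6
    (by decide) (by decide) h
  rw [show pathsAux [(1,2),(1,4),(2,3),(2,5),(0,1),(0,6)] 6 [0] 0 =
    [[0,1],[0,1,2],[0,1,2,3],[0,1,2,5],[0,1,4],[0,6]] from by decide] at hm
  simp at hm
  rcases hm with rfl | rfl | rfl | rfl | rfl | rfl
  · exact absurd h.2.2.2.2 (by decide)
  · exact absurd h.2.2.2.2 (by decide)
  · exact absurd h.2.2.2.2 (by decide)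
  · exact Or.inl rfl
  · exact Or.inr (Or.inl rfl)
  · exact Or.inr (Or.inr rfl)

lemma W_path1 {p : List ℕ} (h : IsDelegPath W 1 p) : p = [1,2,5] ∨ p = [1,4] := by
  have hm := delegPath_mem W [(1,2),(1,4),(2,3),(2,5),(0,1),(0,6)] 6
    (by decide) (by decide) h
  rw [show pathsAux [(1,2),(1,4),(2,3),(2,5),(0,1),(0,6)] 6 [1] 1 =
    [[1,2],[1,2,3],[1,2,5],[1,4]] from by decide] at hm
  simp at hm
  rcases hm with rfl | rfl | rfl | rfl
  · exact absurd h.2.2.2.2 (by decide)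
  · exact absurd h.2.2.2.2 (by decide)
  · exact Or.inl rfl
  · exact Or.inr rfl

lemma W_path2 {p : List ℕ} (h : IsDelegPath W 2 p) : p = [2,5] := by
  have hm := delegPath_mem W [(1,2),(1,4),(2,3),(2,5),(0,1),(0,6)] 6
    (by decide) (by decide) h
  rw [show pathsAux [(1,2),(1,4),(2,3),(2,5),(0,1),(0,6)] 6 [2] 2 =
    [[2,3],[2,5]] from by decide] at hm
  simp at hm
  rcases hm with rfl | rfl
  · exact absurd h.2.2.2.2 (by decide)
  · rfl

lemma W'_path0 {p : List ℕ} (h : IsDelegPath W' 0 p) : p = [0,1] ∨ p = [0,6] := by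
  have hm := delegPath_mem W' [(2,3),(2,5),(0,1),(0,6)] 4 (by decide) (by decide) h
  rw [show pathsAux [(2,3),(2,5),(0,1),(0,6)] 4 [0] 0 = [[0,1],[0,6]]
    from by decide] at hm
  simpa using hm

lemma W'_path2 {p : List ℕ} (h : IsDelegPath W' 2 p) : p = [2,5] := by
  have hm := delegPath_mem W' [(2,3),(2,5),(0,1),(0,6)] 4 (by decide) (by decide) h
  rw [show pathsAux [(2,3),(2,5),(0,1),(0,6)] 4 [2] 2 = [[2,3],[2,5]]
    from by decide] at hm
  simp at hm
  rcases hm with rfl | rfl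
  · exact absurd h.2.2.2.2 (by decide)
  · rfl

lemma U_path0 {p : List ℕ} (h : IsDelegPath U 0 p) : p = [0,3] ∨ p = [0,1,2] := by
  have hm := delegPath_mem U [(1,2),(0,3),(0,1)] 3 (by decide) (by decide) h
  rw [show pathsAux [(1,2),(0,3),(0,1)] 3 [0] 0 = [[0,3],[0,1],[0,1,2]]
    from by decide] at hm
  simp at hm
  rcases hm with rfl | rfl | rfl
  · exact Or.inl rfl
  · exact absurd h.2.2.2.2 (by decide)
  · exact Or.inr rfl

lemma U_path1 {p : List ℕ} (h : IsDelegPath U 1 p) : p = [1,2] := by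
  have hm := delegPath_mem U [(1,2),(0,3),(0,1)] 3 (by decide) (by decide) h
  rw [show pathsAux [(1,2),(0,3),(0,1)] 3 [1] 1 = [[1,2]] from by decide] at hm
  simpa using hm

lemma U'_path0 {p : List ℕ} (h : IsDelegPath U' 0 p) : p = [0,3] ∨ p = [0,1] := by
  have hm := delegPath_mem U' [(0,3),(0,1)] 2 (by decide) (by decide) h
  rw [show pathsAux [(0,3),(0,1)] 2 [0] 0 = [[0,3],[0,1]] from by decide] at hm
  simpa using hm

/-! ### Sequence-set computations for comparability -/

lemma Seqs_P0 : Seqs P0 0 = {[1], [2]} := by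
  ext s
  simp only [Seqs, Set.mem_setOf_eq, Set.mem_insert_iff, Set.mem_singleton_iff]
  constructor
  · rintro ⟨p, hp, rfl⟩
    rcases P0_path0 hp with rfl | rfl
    · exact Or.inl (by decide)
    · exact Or.inr (by decide)
  · rintro (rfl | rfl)
    · exact ⟨[0,1], by decide, by decide⟩
    · exact ⟨[0,2], by decide, by decide⟩

lemma Seqs_K1 : Seqs K1 0 = {[1,2], [2]} := by
  ext s
  simp only [Seqs, Set.mem_setOf_eq, Set.mem_insert_iff, Set.mem_singleton_iff]
  constructor
  · rintro ⟨p, hp, rfl⟩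
    rcases K1_path0 hp with rfl | rfl
    · exact Or.inl (by decide)
    · exact Or.inr (by decide)
  · rintro (rfl | rfl)
    · exact ⟨[0,1,2], by decide, by decide⟩
    · exact ⟨[0,3], by decide, by decide⟩

lemma Seqs_K2 : Seqs K2 0 = {[1], [2,1]} := by
  ext s
  simp only [Seqs, Set.mem_setOf_eq, Set.mem_insert_iff, Set.mem_singleton_iff]
  constructor
  · rintro ⟨p, hp, rfl⟩
    rcases K2_path0 hp with rfl | rfl
    · exact Or.inr (by decide)
    · exact Or.inl (by decide)
  · rintro (rfl | rfl)
    · exact ⟨[0,3], by decide, by decide⟩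
    · exact ⟨[0,1,2], by decide, by decide⟩
/-! ### Confluence forces the comparisons `[2] ▷ [1,2]` and `[1] ▷ [2,1]` -/

lemma L1 {f : DelegationRule} {R : List ℕ → List ℕ → Prop}
    (hf : IsSequenceRule f R) (hconf : Confluent f) : R [2] [1, 2] := by
  have d0 : Delegating K1 0 := ⟨by decide, [0,3], by decide⟩
  have d1 : Delegating K1 1 := ⟨by decide, [1,2], by decide⟩
  rcases K1_path0 (f.valid K1 0 d0) with h0 | h0
  · rcases K1_path1 (f.valid K1 1 d1) with h1 | h1
    · exfalso
      obtain ⟨w, -, huniq⟩ := hconf K1 0 d0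
      have e1 : (1 : ℕ) = w := huniq 1 ⟨0, d0, by rw [h0]; decide⟩
      have e3 : (3 : ℕ) = w := huniq 3 ⟨1, d1, by rw [h1]; decide⟩
      omega
    · have hm := (hf.2 K1 1 d1).2 [1,2] ⟨[1,0,3], by decide, by decide⟩
        (by rw [h1]; decide)
      rwa [h1, show seqOf K1 [1,2] = [2] from by decide] at hm
  · have hm := (hf.2 K1 0 d0).2 [1,2] ⟨[0,1,2], by decide, by decide⟩
      (by rw [h0]; decide)
    rwa [h0, show seqOf K1 [0,3] = [2] from by decide] at hm

lemma L2 {f : DelegationRule} {R : List ℕ → List ℕ → Prop}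
    (hf : IsSequenceRule f R) (hconf : Confluent f) : R [1] [2, 1] := by
  have d0 : Delegating K2 0 := ⟨by decide, [0,3], by decide⟩
  have d1 : Delegating K2 1 := ⟨by decide, [1,2], by decide⟩
  rcases K2_path0 (f.valid K2 0 d0) with h0 | h0
  · rcases K2_path1 (f.valid K2 1 d1) with h1 | h1
    · exfalso
      obtain ⟨w, -, huniq⟩ := hconf K2 0 d0
      have e1 : (1 : ℕ) = w := huniq 1 ⟨0, d0, by rw [h0]; decide⟩
      have e3 : (3 : ℕ) = w := huniq 3 ⟨1, d1, by rw [h1]; decide⟩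
      omega
    · have hm := (hf.2 K2 1 d1).2 [2,1] ⟨[1,0,3], by decide, by decide⟩
        (by rw [h1]; decide)
      rwa [h1, show seqOf K2 [1,2] = [1] from by decide] at hm
  · have hm := (hf.2 K2 0 d0).2 [2,1] ⟨[0,1,2], by decide, by decide⟩
      (by rw [h0]; decide)
    rwa [h0, show seqOf K2 [0,3] = [1] from by decide] at hm

/-! ### The two main cases -/

lemma caseA {f : DelegationRule} {R : List ℕ → List ℕ → Prop}
    (hf : IsSequenceRule f R) (hconf : Confluent f) (hcr : CopyRobust f)
    (hA : R [1] [2]) : False := by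
  have hlin := hf.1
  have hL1 := L1 hf hconf
  have compK1 : Comparable [1,2] [2] := ⟨K1, 0, Seqs_K1⟩
  have comp12 : Comparable [1] [2] := ⟨P0, 0, Seqs_P0⟩
  have d0 : Delegating W 0 := ⟨by decide, [0,6], by decide⟩
  have d1 : Delegating W 1 := ⟨by decide, [1,4], by decide⟩
  have d2 : Delegating W 2 := ⟨by decide, [2,5], by decide⟩
  have hf2 : f.path W 2 = [2,5] := W_path2 (f.valid W 2 d2)
  have hf1 : f.path W 1 = [1,4] := by
    rcases W_path1 (f.valid W 1 d1) with h | h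
    · exfalso
      have hm := (hf.2 W 1 d1).2 [2] ⟨[1,4], by decide, by decide⟩ (by rw [h]; decide)
      rw [h, show seqOf W [1,2,5] = [1,2] from by decide] at hm
      exact asymR hlin compK1 hm hL1
    · exact h
  have hf0 : f.path W 0 = [0,6] := by
    rcases W_path0 (f.valid W 0 d0) with h | h | h
    · exfalso
      obtain ⟨w, -, huniq⟩ := hconf W 1 d1
      have e4 : (4 : ℕ) = w := huniq 4 ⟨1, d1, by rw [hf1]; decide⟩
      have e2 : (2 : ℕ) = w := huniq 2 ⟨0, d0, by rw [h]; decide⟩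
      omega
    · exfalso
      have hm := (hf.2 W 0 d0).2 [2] ⟨[0,6], by decide, by decide⟩ (by rw [h]; decide)
      rw [h, show seqOf W [0,1,4] = [1,2] from by decide] at hm
      exact asymR hlin compK1 hm hL1
    · exact h
  have d'0 : Delegating W' 0 := ⟨by decide, [0,1], by decide⟩
  have d'2 : Delegating W' 2 := ⟨by decide, [2,5], by decide⟩
  have hg2 : f.path W' 2 = [2,5] := W'_path2 (f.valid W' 2 d'2)
  have hg0 : f.path W' 0 = [0,1] := by
    rcases W'_path0 (f.valid W' 0 d'0) with h | h
    · exact h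
    · exfalso
      have hm := (hf.2 W' 0 d'0).2 [1] ⟨[0,1], by decide, by decide⟩ (by rw [h]; decide)
      rw [h, show seqOf W' [0,6] = [2] from by decide] at hm
      exact asymR hlin comp12 hA hm
  have hDel : {d | Delegating W d} = ↑({0,1,2} : Finset ℕ) := by
    ext d
    simp only [Set.mem_setOf_eq, Finset.coe_insert, Set.mem_insert_iff,
      Finset.coe_singleton, Set.mem_singleton_iff]
    constructor
    · rintro ⟨hV, p, hp⟩
      have hV' : d ∈ ({0,1,2,3,4,5,6} : Finset ℕ) := hV
      fin_cases hV'
      · exact Or.inl rfl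
      · exact Or.inr (Or.inl rfl)
      · exact Or.inr (Or.inr rfl)
      · exact absurd hp (not_isDelegPath_of_no_out W 3 (by decide) p)
      · exact absurd hp (not_isDelegPath_of_no_out W 4 (by decide) p)
      · exact absurd hp (not_isDelegPath_of_no_out W 5 (by decide) p)
      · exact absurd hp (not_isDelegPath_of_no_out W 6 (by decide) p)
    · rintro (rfl | rfl | rfl)
      exacts [d0, d1, d2]
  have hDel' : {d | Delegating W' d} = ↑({0,2} : Finset ℕ) := by
    ext d
    simp only [Set.mem_setOf_eq, Finset.coe_insert, Set.mem_insert_iff,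
      Finset.coe_singleton, Set.mem_singleton_iff]
    constructor
    · rintro ⟨hV, p, hp⟩
      have hV' : d ∈ ({0,1,2,3,4,5,6} : Finset ℕ) := hV
      fin_cases hV'
      · exact Or.inl rfl
      · exact absurd hp (not_isDelegPath_of_no_out W' 1 (by decide) p)
      · exact Or.inr rfl
      · exact absurd hp (not_isDelegPath_of_no_out W' 3 (by decide) p)
      · exact absurd hp (not_isDelegPath_of_no_out W' 4 (by decide) p)
      · exact absurd hp (not_isDelegPath_of_no_out W' 5 (by decide) p)
      · exact absurd hp (not_isDelegPath_of_no_out W' 6 (by decide) p)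
    · rintro (rfl | rfl)
      exacts [d'0, d'2]
  have hEnd4 : {d | Delegating W d ∧ (f.path W d).getLast? = some 4} =
      ↑({1} : Finset ℕ) := by
    ext d
    simp only [Set.mem_setOf_eq, Finset.coe_singleton, Set.mem_singleton_iff]
    constructor
    · rintro ⟨hd, hl⟩
      have hd' : d ∈ ({0,1,2} : Finset ℕ) := by
        rw [← Finset.mem_coe, ← hDel]; exact hd
      fin_cases hd'
      · rw [hf0] at hl; exact absurd hl (by decide)
      · rfl
      · rw [hf2] at hl; exact absurd hl (by decide)
    · rintro rfl
      exact ⟨d1, by simp [hf1]⟩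
  have hEnd4' : {d | Delegating W' d ∧ (f.path W' d).getLast? = some 4} =
      ↑(∅ : Finset ℕ) := by
    ext d
    simp only [Set.mem_setOf_eq, Finset.coe_empty, Set.mem_empty_iff_false, iff_false]
    rintro ⟨hd, hl⟩
    have hd' : d ∈ ({0,2} : Finset ℕ) := by
      rw [← Finset.mem_coe, ← hDel']; exact hd
    fin_cases hd'
    · rw [hg0] at hl; exact absurd hl (by decide)
    · rw [hg2] at hl; exact absurd hl (by decide)
  have hEnd1' : {d | Delegating W' d ∧ (f.path W' d).getLast? = some 1} =
      ↑({0} : Finset ℕ) := by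
    ext d
    simp only [Set.mem_setOf_eq, Finset.coe_singleton, Set.mem_singleton_iff]
    constructor
    · rintro ⟨hd, hl⟩
      have hd' : d ∈ ({0,2} : Finset ℕ) := by
        rw [← Finset.mem_coe, ← hDel']; exact hd
      fin_cases hd'
      · rfl
      · rw [hg2] at hl; exact absurd hl (by decide)
    · rintro rfl
      exact ⟨d'0, by simp [hg0]⟩
  have heq := hcr W W' 1 4 d1 (by simp [hf1]) (by simp [hf1])
    (by decide) (by decide) rfl (by decide)
  rw [weight_eq f W 4 {1} {0,1,2} hEnd4 hDel,
      weight_eq f W' 4 ∅ {0,2} hEnd4' hDel',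
      weight_eq f W' 1 {0} {0,2} hEnd1' hDel'] at heq
  rw [show ({1} : Finset ℕ).card = 1 from by decide,
      show ({0,1,2} : Finset ℕ).card = 3 from by decide,
      show (∅ : Finset ℕ).card = 0 from by decide,
      show ({0} : Finset ℕ).card = 1 from by decide,
      show ({0,2} : Finset ℕ).card = 2 from by decide,
      show W.C.card = 3 from by decide,
      show W'.C.card = 4 from by decide] at heq
  norm_num at heq

lemma caseB {f : DelegationRule} {R : List ℕ → List ℕ → Prop}
    (hf : IsSequenceRule f R) (hconf : Confluent f) (hcr : CopyRobust f)
    (hB : R [2] [1]) : False := by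
  have hlin := hf.1
  have hL2 := L2 hf hconf
  have compK2 : Comparable [1] [2,1] := ⟨K2, 0, Seqs_K2⟩
  have comp12 : Comparable [1] [2] := ⟨P0, 0, Seqs_P0⟩
  have d0 : Delegating U 0 := ⟨by decide, [0,3], by decide⟩
  have d1 : Delegating U 1 := ⟨by decide, [1,2], by decide⟩
  have hf1 : f.path U 1 = [1,2] := U_path1 (f.valid U 1 d1)
  have hf0 : f.path U 0 = [0,3] := by
    rcases U_path0 (f.valid U 0 d0) with h | h
    · exact h
    · exfalso
      have hm := (hf.2 U 0 d0).2 [1] ⟨[0,3], by decide, by decide⟩ (by rw [h]; decide)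
      rw [h, show seqOf U [0,1,2] = [2,1] from by decide] at hm
      exact asymR hlin compK2 hL2 hm
  have d'0 : Delegating U' 0 := ⟨by decide, [0,3], by decide⟩
  have hg0 : f.path U' 0 = [0,1] := by
    rcases U'_path0 (f.valid U' 0 d'0) with h | h
    · exfalso
      have hm := (hf.2 U' 0 d'0).2 [2] ⟨[0,1], by decide, by decide⟩ (by rw [h]; decide)
      rw [h, show seqOf U' [0,3] = [1] from by decide] at hm
      exact asymR hlin comp12 hm hB
    · exact h
  have hDel : {d | Delegating U d} = ↑({0,1} : Finset ℕ) := by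
    ext d
    simp only [Set.mem_setOf_eq, Finset.coe_insert, Set.mem_insert_iff,
      Finset.coe_singleton, Set.mem_singleton_iff]
    constructor
    · rintro ⟨hV, p, hp⟩
      have hV' : d ∈ ({0,1,2,3} : Finset ℕ) := hV
      fin_cases hV'
      · exact Or.inl rfl
      · exact Or.inr rfl
      · exact absurd hp (not_isDelegPath_of_no_out U 2 (by decide) p)
      · exact absurd hp (not_isDelegPath_of_no_out U 3 (by decide) p)
    · rintro (rfl | rfl)
      exacts [d0, d1]
  have hDel' : {d | Delegating U' d} = ↑({0} : Finset ℕ) := by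
    ext d
    simp only [Set.mem_setOf_eq, Finset.coe_singleton, Set.mem_singleton_iff]
    constructor
    · rintro ⟨hV, p, hp⟩
      have hV' : d ∈ ({0,1,2,3} : Finset ℕ) := hV
      fin_cases hV'
      · rfl
      · exact absurd hp (not_isDelegPath_of_no_out U' 1 (by decide) p)
      · exact absurd hp (not_isDelegPath_of_no_out U' 2 (by decide) p)
      · exact absurd hp (not_isDelegPath_of_no_out U' 3 (by decide) p)
    · rintro rfl
      exact d'0
  have hEnd2 : {d | Delegating U d ∧ (f.path U d).getLast? = some 2} =
      ↑({1} : Finset ℕ) := by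
    ext d
    simp only [Set.mem_setOf_eq, Finset.coe_singleton, Set.mem_singleton_iff]
    constructor
    · rintro ⟨hd, hl⟩
      have hd' : d ∈ ({0,1} : Finset ℕ) := by
        rw [← Finset.mem_coe, ← hDel]; exact hd
      fin_cases hd'
      · rw [hf0] at hl; exact absurd hl (by decide)
      · rfl
    · rintro rfl
      exact ⟨d1, by simp [hf1]⟩
  have hEnd2' : {d | Delegating U' d ∧ (f.path U' d).getLast? = some 2} =
      ↑(∅ : Finset ℕ) := by
    ext d
    simp only [Set.mem_setOf_eq, Finset.coe_empty, Set.mem_empty_iff_false, iff_false]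
    rintro ⟨hd, hl⟩
    have hd' : d ∈ ({0} : Finset ℕ) := by
      rw [← Finset.mem_coe, ← hDel']; exact hd
    fin_cases hd'
    rw [hg0] at hl; exact absurd hl (by decide)
  have hEnd1' : {d | Delegating U' d ∧ (f.path U' d).getLast? = some 1} =
      ↑({0} : Finset ℕ) := by
    ext d
    simp only [Set.mem_setOf_eq, Finset.coe_singleton, Set.mem_singleton_iff]
    constructor
    · rintro ⟨hd, hl⟩
      have hd' : d ∈ ({0} : Finset ℕ) := by
        rw [← Finset.mem_coe, ← hDel']; exact hd
      fin_cases hd'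
      rfl
    · rintro rfl
      exact ⟨d'0, by simp [hg0]⟩
  have heq := hcr U U' 1 2 d1 (by simp [hf1]) (by simp [hf1])
    (by decide) (by decide) rfl (by decide)
  rw [weight_eq f U 2 {1} {0,1} hEnd2 hDel,
      weight_eq f U' 2 ∅ {0} hEnd2' hDel',
      weight_eq f U' 1 {0} {0} hEnd1' hDel'] at heq
  rw [show ({1} : Finset ℕ).card = 1 from by decide,
      show ({0,1} : Finset ℕ).card = 2 from by decide,
      show (∅ : Finset ℕ).card = 0 from by decide,
      show ({0} : Finset ℕ).card = 1 from by decide,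
      show U.C.card = 2 from by decide,
      show U'.C.card = 3 from by decide] at heq
  norm_num at heq
/-- no sequence rule is both confluent and copy-robust. -/
theorem no_confluent_copy_robust_sequence_rule (f : DelegationRule)
    (R : List ℕ → List ℕ → Prop) (hf : IsSequenceRule f R) :
    ¬ (Confluent f ∧ CopyRobust f) := by
  rintro ⟨hconf, hcr⟩
  have comp12 : Comparable [1] [2] := ⟨P0, 0, Seqs_P0⟩
  rcases totalR hf.1 comp12 (by decide) with h | h
  · exact caseA hf hconf hcr h
  · exact caseB hf hconf hcr h

end RankedDelegation
end

section
/- BordaBranching with priority-order tie-breaking is copy-robust. -/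
/-!
Formalization of the ranked-delegation (liquid democracy) setting of
"Liquid Democracy with Ranked Delegations".

Vertices are natural numbers.  An instance carries the vertex set `V`,
the edge set `E`, the distinguished set `C` of casting voters (which have
no outgoing edges), and a rank function such that for every vertex the
ranks of its outgoing edges are exactly `{1, ..., outdeg}`.
-/

namespace RankedDelegation

lemma sub_zip_cons {α : Type*} (x : α) (L : List α) :
    L.zip L.tail ⊆ (x :: L).zip L := by
  cases L with
  | nil => simp
  | cons y L' =>
    intro e he
    simp only [List.zip_cons_cons]
    exact List.mem_cons_of_mem _ he

lemma mem_zip_tail_append {α : Type*} (a b : α) :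
    ∀ (s t : List α), (a, b) ∈ (s ++ a :: b :: t).zip (s ++ a :: b :: t).tail := by
  intro s t
  induction s with
  | nil => simp
  | cons x s ih =>
    show (a, b) ∈ (x :: (s ++ a :: b :: t)).zip ((x :: (s ++ a :: b :: t))).tail
    exact sub_zip_cons x _ ih

lemma zip_tail_mem {α : Type*} :
    ∀ {p : List α} {a b : α}, (a, b) ∈ p.zip p.tail → ∃ s t, p = s ++ a :: b :: t := by
  intro p
  induction p with
  | nil => simp
  | cons x L ih =>
    intro a b h
    cases L with
    | nil => simp at h
    | cons y L' =>
      rw [show (x :: y :: L').tail = y :: L' from rfl, List.zip_cons_cons] at h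
      rcases List.mem_cons.mp h with h | h
      · refine ⟨[], L', ?_⟩
        have h1 : a = x := congrArg Prod.fst h
        have h2 : b = y := congrArg Prod.snd h
        simp [← h1, ← h2]
      · obtain ⟨s, t, hst⟩ := ih h
        exact ⟨x :: s, t, by rw [List.cons_append, ← hst]⟩

lemma zip_tail_prefix {α : Type*} :
    ∀ {q p : List α}, q <+: p → q.zip q.tail <+: p.zip p.tail := by
  intro q
  induction q with
  | nil => intro p _; simp
  | cons a q' ih =>
    intro p hq
    obtain ⟨p', rfl, hq'⟩ : ∃ (p' : List α), p = a :: p' ∧ q' <+: p' := by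
      obtain ⟨r, hr⟩ := hq
      cases p with
      | nil => simp at hr
      | cons b p' =>
        have hb : a = b := by injection hr
        subst hb
        exact ⟨p', rfl, ⟨r, by injection hr⟩⟩
    cases q' with
    | nil => simp
    | cons b q'' =>
      obtain ⟨p'', rfl⟩ : ∃ p'', p' = b :: p'' := by
        obtain ⟨r, hr⟩ := hq'
        cases p' with
        | nil => simp at hr
        | cons c p'' => exact ⟨p'', by injection hr with h1 _; rw [h1]⟩
      show ((a, b) :: (b :: q'').zip ((b :: q'').tail)) <+: ((a, b) :: (b :: p'').zip ((b :: p'').tail))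
      obtain ⟨t, ht⟩ := ih hq'
      exact ⟨t, by rw [List.cons_append, ht]⟩

lemma exists_succ {α : Type*} {p : List α} {a m : α}
    (ha : a ∈ p) (hm : p.getLast? = some m) (hne : a ≠ m) :
    ∃ b, (a, b) ∈ p.zip p.tail := by
  obtain ⟨s, t, rfl⟩ := List.append_of_mem ha
  cases t with
  | nil =>
    rw [List.getLast?_append] at hm
    simp at hm
    exact absurd hm hne
  | cons b t' => exact ⟨b, mem_zip_tail_append a b s t'⟩

lemma zip_tail_append_mem {α : Type*} :
    ∀ {p : List α} {x : α} {e : α × α},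
      e ∈ (p ++ [x]).zip (p ++ [x]).tail →
      e ∈ p.zip p.tail ∨ ∃ m, p.getLast? = some m ∧ e = (m, x) := by
  intro p
  induction p with
  | nil => simp
  | cons a p' ih =>
    intro x e h
    cases p' with
    | nil =>
      have h2 : e ∈ ([(a, x)] : List (α × α)) := h
      exact Or.inr ⟨a, by simp, by simpa using h2⟩
    | cons b p'' =>
      have h' : e ∈ ((a, b) :: ((b :: p'' ++ [x]).zip ((b :: p'' ++ [x])).tail)) := by
        exact h
      rcases List.mem_cons.mp h' with h | h
      · exact Or.inl (by rw [h]; show (a,b) ∈ (a,b) :: _; simp)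
      · rcases ih h with h | ⟨m, hm, he⟩
        · exact Or.inl (sub_zip_cons a (b :: p'') h)
        · exact Or.inr ⟨m, by rw [List.getLast?_cons_cons]; exact hm, he⟩

lemma chain'_succ {α : Type*} {R : α → α → Prop} :
    ∀ {l : List α}, List.Chain' R l → ∀ e ∈ l, ∀ m, l.getLast? = some m →
      e = m ∨ ∃ e' ∈ l, R e e' := by
  intro l
  induction l with
  | nil => simp
  | cons a l' ih =>
    intro hc e he m hm
    cases l' with
    | nil => simp at he hm; exact Or.inl (he.trans hm)
    | cons b l'' =>
      rcases List.mem_cons.mp he with rfl | he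
      · exact Or.inr ⟨b, by simp, (List.isChain_cons_cons.mp hc).1⟩
      · rcases ih (List.isChain_cons_cons.mp hc).2 e he m (by rwa [List.getLast?_cons_cons] at hm) with h | ⟨e', he', hr⟩
        · exact Or.inl h
        · exact Or.inr ⟨e', List.mem_cons_of_mem _ he', hr⟩

lemma mem_of_getLast?' {α : Type*} {l : List α} {a : α} (h : l.getLast? = some a) : a ∈ l := by
  cases l with
  | nil => simp at h
  | cons b l' =>
    have := List.getLast?_eq_getLast (l := b :: l') (by simp)
    rw [this] at h
    exact (Option.some_inj.mp h) ▸ List.getLast_mem _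

lemma ne_getLast_of_strict_prefix {α : Type*} {q r : List α} {m mp : α}
    (hnd : (q ++ r).Nodup) (hr : r ≠ []) (hm : q.getLast? = some m)
    (hmp : (q ++ r).getLast? = some mp) : m ≠ mp := by
  rw [List.getLast?_append] at hmp
  have hrl : r.getLast? = some (r.getLast hr) := List.getLast?_eq_getLast hr
  rw [hrl] at hmp
  simp at hmp
  have hmem : m ∈ q := mem_of_getLast?' hm
  have hmpr : mp ∈ r := hmp ▸ List.getLast_mem hr
  exact fun hEq => (List.nodup_append'.mp hnd).2.2 hmem (hEq ▸ hmpr)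


lemma edge_src_ne_last {p : List ℕ} {a b m : ℕ} (hnd : p.Nodup)
    (h : (a, b) ∈ p.zip p.tail) (hm : p.getLast? = some m) : a ≠ m := by
  obtain ⟨s, t, rfl⟩ := zip_tail_mem h
  have h2 : s ++ a :: b :: t = (s ++ [a]) ++ (b :: t) := by simp
  rw [h2] at hnd hm
  exact ne_getLast_of_strict_prefix hnd (by simp) (by simp) hm

lemma edge_mem_zip {p : List ℕ} {a b : ℕ} (h : (a, b) ∈ p.zip p.tail) :
    a ∈ p ∧ b ∈ p := by
  obtain ⟨s, t, rfl⟩ := zip_tail_mem h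
  constructor <;> simp

lemma follow_prefix {B : Finset (ℕ × ℕ)}
    (huniq : ∀ a b b', (a, b) ∈ B → (a, b') ∈ B → b = b') :
    ∀ (q p : List ℕ), q.head? = p.head? →
      (∀ e ∈ q.zip q.tail, e ∈ B) → (∀ e ∈ p.zip p.tail, e ∈ B) →
      q.length ≤ p.length → q <+: p := by
  intro q
  induction q with
  | nil => intro p _ _ _ _; exact List.nil_prefix
  | cons a q' ih =>
    intro p hh hqB hpB hlen
    cases p with
    | nil => simp at hlen
    | cons a' p' =>
      have haa : a = a' := by simpa using hh
      subst haa
      cases q' with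
      | nil => exact ⟨p', rfl⟩
      | cons b q'' =>
        cases p' with
        | nil => simp at hlen
        | cons b' p'' =>
          have hq1 : (a, b) ∈ (a :: b :: q'').zip (a :: b :: q'').tail := by simp
          have hp1 : (a, b') ∈ (a :: b' :: p'').zip (a :: b' :: p'').tail := by simp
          have hbb : b = b' := huniq a b b' (hqB _ hq1) (hpB _ hp1)
          subst hbb
          have hsubq : ∀ e ∈ (b :: q'').zip (b :: q'').tail, e ∈ B := by
            intro e he
            exact hqB e (sub_zip_cons a _ he)
          have hsubp : ∀ e ∈ (b :: p'').zip (b :: p'').tail, e ∈ B := by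
            intro e he
            exact hpB e (sub_zip_cons a _ he)
          have := ih (b :: p'') rfl hsubq hsubp (by simpa using hlen)
          obtain ⟨t, ht⟩ := this
          exact ⟨t, by rw [List.cons_append, ht]⟩

lemma two_le_destruct {l : List ℕ} (h : 2 ≤ l.length) : ∃ a b r, l = a :: b :: r := by
  cases l with
  | nil => simp at h
  | cons a l' =>
    cases l' with
    | nil => simp at h
    | cons b r => exact ⟨a, b, r, rfl⟩

lemma cycle_succ {B : Finset (ℕ × ℕ)} {l : List (ℕ × ℕ)} (h : IsEdgeCycle B l) :
    ∀ e ∈ l, ∃ e' ∈ l, e.2 = e'.1 := by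
  obtain ⟨hne, hmem, hch, e₁, e₂, hh, hl, hw⟩ := h
  intro e he
  rcases chain'_succ hch e he e₂ hl with rfl | ⟨e', he', hr⟩
  · exact ⟨e₁, List.mem_of_mem_head? (hh ▸ rfl), hw⟩
  · exact ⟨e', he', hr⟩

lemma acyclic_subset {B B' : Finset (ℕ × ℕ)} (hs : B ⊆ B') (h : Acyclic B') : Acyclic B := by
  rintro ⟨l, hne, hmem, hch, rest⟩
  exact h ⟨l, hne, fun e he => hs (hmem e he), hch, rest⟩

/-- BordaBranching with priority-order tie-breaking is
copy-robust. -/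
theorem borda_branching_copy_robust (f : DelegationRule) (pi : ℕ → ℕ)
    (hf : IsBordaBranching f pi) : CopyRobust f := by
  classical
  obtain ⟨hinj, hbb⟩ := hf
  intro G G' v c hv hlen2 hlast hV hC hrank hE
  -- basic facts
  have hpathv := f.valid G v hv
  have hpv : f.path G v = [v, c] := by
    obtain ⟨hl2, hh, hnd, hedge, hcex⟩ := hpathv
    obtain ⟨a, b, r, hr⟩ := two_le_destruct hl2
    rw [hr] at hh hlast hlen2
    have hr0 : r = [] := by
      have : r.length = 0 := by simpa using hlen2
      exact List.length_eq_zero_iff.mp this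
    subst hr0
    have ha : a = v := by simpa using hh
    have hb : b = c := by simpa using hlast
    rw [hr, ha, hb]
  have hvcE : (v, c) ∈ G.E := by
    obtain ⟨_, _, _, hedge, _⟩ := hpathv
    apply hedge
    rw [hpv]; simp
  have hcC : c ∈ G.C := by
    obtain ⟨_, _, _, _, c', hc', hlc⟩ := hpathv
    rw [hpv] at hlc
    simp at hlc
    first | rwa [hlc] at hc' | rwa [← hlc] at hc'
  have hvnC : v ∉ G.C := G.C_no_out (v, c) hvcE
  have hcnev : c ≠ v := fun h => hvnC (h ▸ hcC)
  have hEsub : G'.E ⊆ G.E := by rw [hE]; exact Finset.filter_subset _ _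
  have hEne : ∀ e ∈ G'.E, e.1 ≠ v := by
    intro e he; rw [hE] at he; exact (Finset.mem_filter.mp he).2
  have hEmem : ∀ e ∈ G.E, e.1 ≠ v → e ∈ G'.E := by
    intro e he hne; rw [hE]; exact Finset.mem_filter.mpr ⟨he, hne⟩
  -- characterization of delegating voters in G'
  have hnotDel'v : ¬ Delegating G' v := by
    rintro ⟨_, q, hl2, hh, _, hedge, _⟩
    obtain ⟨a, b, r, hr⟩ := two_le_destruct hl2
    rw [hr] at hh hedge
    have ha : a = v := by simpa using hh
    have : (a, b) ∈ G'.E := hedge _ (by simp)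
    exact hEne _ this ha
  have hDel'mp : ∀ d, Delegating G' d → Delegating G d ∧ d ≠ v := by
    intro d hd
    have hdnev : d ≠ v := fun h => hnotDel'v (h ▸ hd)
    refine ⟨?_, hdnev⟩
    obtain ⟨hdV, q, hl2, hh, hnd, hedge, m, hmC, hlm⟩ := hd
    refine ⟨hV ▸ hdV, ?_⟩
    rw [hC] at hmC
    have hqne : q ≠ [] := by intro h; rw [h] at hl2; simp at hl2
    rcases Finset.mem_insert.mp hmC with rfl | hmC
    · have hcq : c ∉ q := by
        intro hcq
        obtain ⟨b, hb⟩ := exists_succ hcq hlm hcnev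
        exact G.C_no_out (c, b) (hEsub (hedge _ hb)) hcC
      refine ⟨q ++ [c], ?_, ?_, ?_, ?_, c, hcC, ?_⟩
      · rw [List.length_append]; omega
      · rw [List.head?_append]
        cases q with
        | nil => exact absurd rfl hqne
        | cons a q' => simpa using hh
      · refine List.Nodup.append hnd (by simp) ?_
        intro x hx hxc
        simp at hxc
        exact hcq (hxc ▸ hx)
      · intro e he
        rcases zip_tail_append_mem he with he | ⟨m', hm', he⟩
        · exact hEsub (hedge _ he)
        · rw [hlm] at hm'
          have : m' = m := by simpa using hm'.symm
          rw [he, this]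
          exact hvcE
      · rw [List.getLast?_append]; simp
    · exact ⟨q, hl2, hh, hnd, fun e he => hEsub (hedge e he), m, hmC, hlm⟩
  have hDel'mpr : ∀ d, Delegating G d → d ≠ v → Delegating G' d := by
    intro d hd hdnev
    obtain ⟨hdV, p, hl2, hh, hnd, hedge, m, hmC, hlm⟩ := hd
    refine ⟨hV.symm ▸ hdV, ?_⟩
    by_cases hvp : v ∈ p
    · obtain ⟨s, t, rfl⟩ := List.append_of_mem hvp
      have hsne : s ≠ [] := by
        intro h
        subst h
        simp at hh
        exact hdnev hh.symm
      have hpre : (s ++ [v]) <+: (s ++ v :: t) := ⟨t, by simp⟩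
      have hql : (s ++ [v]).getLast? = some v := by rw [List.getLast?_append]; simp
      have hqnd : (s ++ [v]).Nodup := hnd.sublist hpre.sublist
      refine ⟨s ++ [v], ?_, ?_, hqnd, ?_, v, ?_, hql⟩
      · rw [List.length_append]
        cases s with
        | nil => exact absurd rfl hsne
        | cons a s' => simp
      · rw [List.head?_append]
        rw [List.head?_append] at hh
        cases s with
        | nil => exact absurd rfl hsne
        | cons a s' => simpa using (by simpa using hh : a = d)
      · intro e he
        have heB : e ∈ (s ++ v :: t).zip (s ++ v :: t).tail :=
          (zip_tail_prefix hpre).subset he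
        have hsrc : e.1 ≠ v := by
          obtain ⟨e1, e2⟩ := e
          exact edge_src_ne_last hqnd he hql
        exact hEmem _ (hedge _ heB) hsrc
      · rw [hC]; exact Finset.mem_insert_self _ _
    · refine ⟨p, hl2, hh, hnd, ?_, m, ?_, hlm⟩
      · intro e he
        have hsrc : e.1 ≠ v := by
          intro h
          obtain ⟨e1, e2⟩ := e
          exact hvp (h ▸ (edge_mem_zip he).1)
        exact hEmem _ (hedge _ he) hsrc
      · rw [hC]; exact Finset.mem_insert_of_mem hmC
  have hDel' : ∀ d, Delegating G' d ↔ (Delegating G d ∧ d ≠ v) := by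
    intro d
    exact ⟨hDel'mp d, fun ⟨h1, h2⟩ => hDel'mpr d h1 h2⟩
  -- the branchings
  obtain ⟨B, hCB, hBmin, hBtie, hBpath⟩ := hbb G
  obtain ⟨B', hCB', hB'min, hB'tie, hB'path⟩ := hbb G'
  have hsrcDel : ∀ e ∈ B, Delegating G e.1 := by
    intro e he
    obtain ⟨heE, h1, _⟩ := hCB.1 e he
    rcases h1 with h1 | h1
    · exact absurd h1 (G.C_no_out e heE)
    · exact h1
  have hBE : ∀ e ∈ B, e ∈ G.E := fun e he => (hCB.1 e he).1
  have hB'E' : ∀ e ∈ B', e ∈ G'.E := fun e he => (hCB'.1 e he).1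
  have hsrcDel' : ∀ e ∈ B', Delegating G' e.1 := by
    intro e he
    obtain ⟨heE, h1, _⟩ := hCB'.1 e he
    rcases h1 with h1 | h1
    · exact absurd h1 (G'.C_no_out e heE)
    · exact h1
  have hsrcB'nev : ∀ e ∈ B', e.1 ≠ v := fun e he => (hDel'mp _ (hsrcDel' e he)).2
  have hBuniq : ∀ a b b', (a, b) ∈ B → (a, b') ∈ B → b = b' := by
    intro a b b' h1 h2
    obtain ⟨w, _, hwu⟩ := hCB.2.2 a (hsrcDel _ h1)
    rw [hwu b h1, hwu b' h2]
  have hB'uniq : ∀ a b b', (a, b) ∈ B' → (a, b') ∈ B' → b = b' := by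
    intro a b b' h1 h2
    obtain ⟨w, _, hwu⟩ := hCB'.2.2 a (hsrcDel' _ h1)
    rw [hwu b h1, hwu b' h2]
  have hvcB : (v, c) ∈ B := by
    apply hBpath v hv
    rw [hpv]; simp
  have hvnB' : ∀ w, (v, w) ∉ B' := fun w hw => hsrcB'nev _ hw rfl
  have hBfv : B.filter (fun e => e.1 = v) = {(v, c)} := by
    ext e
    simp only [Finset.mem_filter, Finset.mem_singleton]
    constructor
    · rintro ⟨heB, hev⟩
      obtain ⟨e1, e2⟩ := e
      simp only at hev
      subst hev
      have := hBuniq e1 e2 c heB hvcB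
      rw [this]
    · rintro rfl; exact ⟨hvcB, rfl⟩
  have hrankOutGG' : ∀ (X : Finset (ℕ × ℕ)) u, rankOut G' X u = rankOut G X u := by
    intro X u; unfold rankOut; rw [hrank]
  have hscoreGG' : ∀ (X : Finset (ℕ × ℕ)), score G' X = score G X := by
    intro X; unfold score; rw [hrank]
  have hCBe : IsCBranching G' (B.erase (v, c)) := by
    refine ⟨?_, acyclic_subset (Finset.erase_subset _ _) hCB.2.1, ?_⟩
    · intro e he
      have heB : e ∈ B := Finset.mem_of_mem_erase he
      have hnevc : e ≠ (v, c) := Finset.ne_of_mem_erase he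
      have hsrc : Delegating G e.1 := hsrcDel _ heB
      have hsrcne : e.1 ≠ v := by
        intro h
        apply hnevc
        obtain ⟨e1, e2⟩ := e
        simp only at h
        subst h
        have := hBuniq e1 e2 c heB hvcB
        rw [this]
      refine ⟨hEmem _ (hBE _ heB) hsrcne, Or.inr (hDel'mpr _ hsrc hsrcne), ?_⟩
      rcases (hCB.1 e heB).2.2 with h | h
      · exact Or.inl (by rw [hC]; exact Finset.mem_insert_of_mem h)
      · by_cases h2 : e.2 = v
        · exact Or.inl (by rw [hC, h2]; exact Finset.mem_insert_self _ _)
        · exact Or.inr (hDel'mpr _ h h2)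
    · intro u hu
      obtain ⟨huG, hunev⟩ := hDel'mp u hu
      obtain ⟨w, hw, hwu⟩ := hCB.2.2 u huG
      refine ⟨w, Finset.mem_erase.mpr ⟨?_, hw⟩, ?_⟩
      · intro h; exact hunev (congrArg Prod.fst h)
      · intro w' hw'
        exact hwu w' (Finset.mem_of_mem_erase hw')
  have hvcnB' : (v, c) ∉ B' := hvnB' c
  have hCBi : IsCBranching G (insert (v, c) B') := by
    refine ⟨?_, ?_, ?_⟩
    · intro e he
      rcases Finset.mem_insert.mp he with rfl | heB'
      · exact ⟨hvcE, Or.inr hv, Or.inl hcC⟩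
      · have heE : e ∈ G.E := hEsub (hB'E' _ heB')
        refine ⟨heE, Or.inr (hDel'mp _ (hsrcDel' _ heB')).1, ?_⟩
        rcases (hCB'.1 e heB').2.2 with h | h
        · rw [hC] at h
          rcases Finset.mem_insert.mp h with h | h
          · exact Or.inr (h ▸ hv)
          · exact Or.inl h
        · exact Or.inr (hDel'mp _ h).1
    · rintro ⟨l, hcyc⟩
      have hmem := hcyc.2.1
      have hsub : ∀ e ∈ l, e ∈ B' := by
        intro e he
        rcases Finset.mem_insert.mp (hmem e he) with rfl | h
        · obtain ⟨e', he', hre⟩ := cycle_succ ⟨hcyc.1, hmem, hcyc.2.2⟩ _ he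
          exfalso
          rcases Finset.mem_insert.mp (hmem e' he') with rfl | h'
          · exact hcnev hre
          · exact G.C_no_out e' (hEsub (hB'E' _ h')) (hre ▸ hcC)
        · exact h
      exact hCB'.2.1 ⟨l, hcyc.1, hsub, hcyc.2.2⟩
    · intro u hu
      by_cases huv : u = v
      · subst huv
        refine ⟨c, Finset.mem_insert_self _ _, ?_⟩
        intro w' hw'
        rcases Finset.mem_insert.mp hw' with h | h
        · exact (Prod.ext_iff.mp h).2
        · exact absurd h (hvnB' w')
      · obtain ⟨w, hw, hwu⟩ := hCB'.2.2 u (hDel'mpr u hu huv)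
        refine ⟨w, Finset.mem_insert_of_mem hw, ?_⟩
        intro w' hw'
        rcases Finset.mem_insert.mp hw' with h | h
        · exact absurd (congrArg Prod.fst h) huv
        · exact hwu w' h
  have hs1 : score G (insert (v, c) B') = score G B' + G.rank (v, c) := by
    unfold score
    rw [Finset.sum_insert hvcnB']
    exact add_comm _ _
  have hs2 : score G (B.erase (v, c)) + G.rank (v, c) = score G B :=
    Finset.sum_erase_add _ _ hvcB
  have hmin1 : score G B ≤ score G B' + G.rank (v, c) := hs1 ▸ hBmin _ hCBi
  have hmin2 : score G B' ≤ score G (B.erase (v, c)) := by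
    have := hB'min _ hCBe
    rwa [hscoreGG', hscoreGG'] at this
  have hseq1 : score G B' = score G (B.erase (v, c)) := by omega
  have hseqi : score G (insert (v, c) B') = score G B := by omega
  -- B' equals B minus the edge (v, c)
  have hBeq : B' = B.erase (v, c) := by
    by_contra hne
    have hine : insert (v, c) B' ≠ B := by
      intro h
      apply hne
      rw [← h, Finset.erase_insert hvcnB']
    have hp1 : PrioPref G pi B (insert (v, c) B') := hBtie _ hCBi hseqi hine
    have hp2 : PrioPref G' pi B' (B.erase (v, c)) := by
      refine hB'tie _ hCBe ?_ (fun h => hne h.symm)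
      rw [hscoreGG', hscoreGG']
      exact hseq1.symm
    obtain ⟨u₀, hu₀D, hu₀lt, hu₀eq⟩ := hp1
    obtain ⟨v₀, hv₀D, hv₀lt, hv₀eq⟩ := hp2
    have hrOB : rankOut G B v = G.rank (v, c) := by
      unfold rankOut; rw [hBfv]; simp
    have hB'fvempty : B'.filter (fun e => e.1 = v) = ∅ := by
      apply Finset.filter_eq_empty_iff.mpr
      intro e he; exact hsrcB'nev e he
    have hrOI : rankOut G (insert (v, c) B') v = G.rank (v, c) := by
      unfold rankOut
      rw [Finset.filter_insert, if_pos rfl, hB'fvempty]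
      simp
    have hrOIne : ∀ u, u ≠ v → rankOut G (insert (v, c) B') u = rankOut G B' u := by
      intro u hu
      unfold rankOut
      rw [Finset.filter_insert, if_neg (fun h => hu h.symm)]
    have hrOEne : ∀ u, u ≠ v → rankOut G (B.erase (v, c)) u = rankOut G B u := by
      intro u hu
      unfold rankOut
      congr 1
      ext e
      simp only [Finset.mem_filter, Finset.mem_erase]
      constructor
      · rintro ⟨⟨_, he⟩, hu'⟩; exact ⟨he, hu'⟩
      · rintro ⟨he, hu'⟩
        refine ⟨⟨?_, he⟩, hu'⟩
        intro h
        subst h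
        exact hu hu'.symm
    have hu₀nev : u₀ ≠ v := by
      intro h
      subst h
      rw [hrOB, hrOI] at hu₀lt
      exact lt_irrefl _ hu₀lt
    have hu₀lt' : rankOut G B u₀ < rankOut G B' u₀ := by
      rwa [hrOIne u₀ hu₀nev] at hu₀lt
    have hv₀nev : v₀ ≠ v := (hDel'mp _ hv₀D).2
    have hv₀lt' : rankOut G B' v₀ < rankOut G B v₀ := by
      rw [hrankOutGG', hrankOutGG'] at hv₀lt
      rwa [hrOEne v₀ hv₀nev] at hv₀lt
    rcases Nat.lt_trichotomy (pi u₀) (pi v₀) with h | h | h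
    · have := hv₀eq u₀ (hDel'mpr u₀ hu₀D hu₀nev) h
      rw [hrankOutGG', hrankOutGG', hrOEne u₀ hu₀nev] at this
      omega
    · have h2 : u₀ = v₀ := hinj h
      subst h2
      omega
    · have := hu₀eq v₀ (hDel'mp _ hv₀D).1 h
      rw [hrOIne v₀ hv₀nev] at this
      omega
  -- key endpoint lemma
  have hBsub : ∀ e ∈ B', e ∈ B := by
    intro e he; rw [hBeq] at he; exact Finset.mem_of_mem_erase he
  have hkey : ∀ d, Delegating G' d →
      ((f.path G' d).getLast? = some v ∧ (f.path G d).getLast? = some c) ∨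
      (∃ m ∈ G.C, (f.path G' d).getLast? = some m ∧ (f.path G d).getLast? = some m) := by
    intro d hd
    have hdG : Delegating G d := (hDel'mp d hd).1
    obtain ⟨hpl2, hph, hpnd, hpedge, mp, hmpC, hplast⟩ := f.valid G d hdG
    obtain ⟨hql2, hqh, hqnd, hqedge, m, hmC', hqlast⟩ := f.valid G' d hd
    have hpB : ∀ e ∈ (f.path G d).zip (f.path G d).tail, e ∈ B := hBpath d hdG
    have hqB : ∀ e ∈ (f.path G' d).zip (f.path G' d).tail, e ∈ B := by
      intro e he; exact hBsub _ (hB'path d hd e he)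
    set p := f.path G d with hpdef
    set q := f.path G' d with hqdef
    have hqp : q <+: p := by
      rcases le_total q.length p.length with hle | hle
      · exact follow_prefix hBuniq q p (by rw [hqh, hph]) hqB hpB hle
      · obtain ⟨r, hr⟩ := follow_prefix hBuniq p q (by rw [hqh, hph]) hpB hqB hle
        rcases eq_or_ne r [] with rfl | hrne
        · rw [← hr, List.append_nil]
        · exfalso
          have hmpne : mp ≠ m :=
            ne_getLast_of_strict_prefix (by rw [hr]; exact hqnd) hrne hplast
              (by rw [hr]; exact hqlast)
          have hmpq : mp ∈ q := by
            rw [← hr]; exact List.mem_append_left r (mem_of_getLast?' hplast)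
          obtain ⟨b, hb⟩ := exists_succ hmpq hqlast hmpne
          exact G.C_no_out (mp, b) (hBE _ (hqB _ hb)) hmpC
    obtain ⟨r, hr⟩ := hqp
    rcases eq_or_ne r [] with rfl | hrne
    · right
      have hqp2 : q = p := by rw [← hr, List.append_nil]
      exact ⟨mp, hmpC, by rw [hqp2]; exact hplast, hplast⟩
    · have hmne : m ≠ mp :=
        ne_getLast_of_strict_prefix (by rw [hr]; exact hpnd) hrne hqlast
          (by rw [hr]; exact hplast)
      have hmp' : m ∈ p := by
        rw [← hr]; exact List.mem_append_left r (mem_of_getLast?' hqlast)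
      obtain ⟨b, hb⟩ := exists_succ hmp' hplast hmne
      have hmbB : (m, b) ∈ B := hpB _ hb
      have hmnC : m ∉ G.C := fun h => G.C_no_out (m, b) (hBE _ hmbB) h
      have hmv : m = v := by
        rw [hC] at hmC'
        rcases Finset.mem_insert.mp hmC' with h | h
        · exact h
        · exact absurd h hmnC
      rw [hmv] at hqlast hmbB hb
      left
      refine ⟨hqlast, ?_⟩
      have hbc : b = c := hBuniq v b c hmbB hvcB
      rw [hbc] at hb
      have hcp : c ∈ p := (edge_mem_zip hb).2
      rcases eq_or_ne c mp with hceq | hcne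
      · rw [hceq]; exact hplast
      · exfalso
        obtain ⟨b', hb'⟩ := exists_succ hcp hplast hcne
        exact G.C_no_out (c, b') (hBE _ (hpB _ hb')) hcC
  -- counting
  have hfinDD : {d | Delegating G d}.Finite :=
    Set.Finite.subset G.V.finite_toSet (fun d hd => hd.1)
  have hfinDD' : {d | Delegating G' d}.Finite :=
    Set.Finite.subset G'.V.finite_toSet (fun d hd => hd.1)
  have hfinA : {d | Delegating G d ∧ (f.path G d).getLast? = some c}.Finite :=
    hfinDD.subset (fun d hd => hd.1)
  have hfinA1 : {d | Delegating G' d ∧ (f.path G' d).getLast? = some c}.Finite :=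
    hfinDD'.subset (fun d hd => hd.1)
  have hfinA2 : {d | Delegating G' d ∧ (f.path G' d).getLast? = some v}.Finite :=
    hfinDD'.subset (fun d hd => hd.1)
  have hAeq : {d | Delegating G d ∧ (f.path G d).getLast? = some c}
      = insert v ({d | Delegating G' d ∧ (f.path G' d).getLast? = some c}
          ∪ {d | Delegating G' d ∧ (f.path G' d).getLast? = some v}) := by
    ext d
    simp only [Set.mem_insert_iff, Set.mem_union, Set.mem_setOf_eq]
    constructor
    · rintro ⟨hd, hdl⟩
      by_cases hdv : d = v
      · exact Or.inl hdv
      · right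
        have hd' : Delegating G' d := hDel'mpr d hd hdv
        rcases hkey d hd' with ⟨h1, h2⟩ | ⟨m, hmC, h1, h2⟩
        · exact Or.inr ⟨hd', h1⟩
        · left
          refine ⟨hd', ?_⟩
          rw [hdl] at h2
          have hmc : m = c := by simpa using h2.symm
          rw [← hmc]
          exact h1
    · rintro (rfl | ⟨hd', h1⟩ | ⟨hd', h1⟩)
      · exact ⟨hv, hlast⟩
      · refine ⟨(hDel'mp d hd').1, ?_⟩
        rcases hkey d hd' with ⟨h2, h3⟩ | ⟨m, hmC, h2, h3⟩
        · rw [h1] at h2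
          exact absurd (by simpa using h2 : c = v) hcnev
        · rw [h1] at h2
          have hmc : m = c := by simpa using h2.symm
          exact hmc ▸ h3
      · refine ⟨(hDel'mp d hd').1, ?_⟩
        rcases hkey d hd' with ⟨h2, h3⟩ | ⟨m, hmC, h2, h3⟩
        · exact h3
        · rw [h1] at h2
          have hmv : m = v := by simpa using h2.symm
          exact absurd (hmv ▸ hmC) hvnC
  have hvnotin : v ∉ ({d | Delegating G' d ∧ (f.path G' d).getLast? = some c}
      ∪ {d | Delegating G' d ∧ (f.path G' d).getLast? = some v}) := by
    simp only [Set.mem_union, Set.mem_setOf_eq]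
    rintro (⟨h, _⟩ | ⟨h, _⟩) <;> exact hnotDel'v h
  have hdisj : Disjoint {d | Delegating G' d ∧ (f.path G' d).getLast? = some c}
      {d | Delegating G' d ∧ (f.path G' d).getLast? = some v} := by
    rw [Set.disjoint_left]
    rintro d ⟨_, h1⟩ ⟨_, h2⟩
    rw [h1] at h2
    exact hcnev (by simpa using h2)
  have hnc1 : {d | Delegating G d ∧ (f.path G d).getLast? = some c}.ncard
      = ({d | Delegating G' d ∧ (f.path G' d).getLast? = some c}.ncard
        + {d | Delegating G' d ∧ (f.path G' d).getLast? = some v}.ncard) + 1 := by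
    rw [hAeq, Set.ncard_insert_of_notMem hvnotin (hfinA1.union hfinA2),
      Set.ncard_union_eq hdisj hfinA1 hfinA2]
  have hDDeq : {d | Delegating G d} = insert v {d | Delegating G' d} := by
    ext d
    simp only [Set.mem_insert_iff, Set.mem_setOf_eq]
    constructor
    · intro hd
      by_cases hdv : d = v
      · exact Or.inl hdv
      · exact Or.inr (hDel'mpr d hd hdv)
    · rintro (rfl | hd)
      · exact hv
      · exact (hDel'mp d hd).1
  have hvnDD' : v ∉ {d | Delegating G' d} := hnotDel'v
  have hnc2 : {d | Delegating G d}.ncard = {d | Delegating G' d}.ncard + 1 := by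
    rw [hDDeq, Set.ncard_insert_of_notMem hvnDD' hfinDD']
  have hCcard : G'.C.card = G.C.card + 1 := by
    rw [hC, Finset.card_insert_of_notMem hvnC]
  unfold weight
  rw [← add_div]
  congr 1
  · push_cast [hnc1]
    ring
  · push_cast [hnc2, hCcard]
    ring

end RankedDelegation
end

section
/- The relation ▷_diff satisfies the two properties characterizing confluence of sequence rules: (i) for any two comparable sequences s,s' and any positive integer x, s ▷_diff s' if and only if (x,s) ▷_diff (x,s'); and (ii) for any s,s' ∈ 𝒮 such that s and the concatenation (s',s) are comparable, s ▷_diff (s',s). -/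
/-!
Formalization of the ranked-delegation (liquid democracy) setting of
"Liquid Democracy with Ranked Delegations".

Vertices are natural numbers.  An instance carries the vertex set `V`,
the edge set `E`, the distinguished set `C` of casting voters (which have
no outgoing edges), and a rank function such that for every vertex the
ranks of its outgoing edges are exactly `{1, ..., outdeg}`.
-/

namespace RankedDelegation

lemma maxR_cons (a : ℕ) (s : List ℕ) : maxR (a :: s) = max a (maxR s) := rfl

lemma maxR_append (s t : List ℕ) : maxR (s ++ t) = max (maxR s) (maxR t) := by
  induction s with
  | nil => simp [maxR]
  | cons a s ih => simp [maxR_cons, ih, Nat.max_assoc]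

lemma le_maxR {x : ℕ} {s : List ℕ} (h : x ∈ s) : x ≤ maxR s := by
  induction s with
  | nil => simp at h
  | cons a s ih =>
    rcases List.mem_cons.1 h with rfl | h
    · exact Nat.le_max_left _ _
    · exact le_trans (ih h) (Nat.le_max_right _ _)

lemma maxR_mem {s : List ℕ} (h : maxR s ≠ 0) : maxR s ∈ s := by
  induction s with
  | nil => simp [maxR] at h
  | cons a s ih =>
    rw [maxR_cons] at h ⊢
    rcases Nat.le_total (maxR s) a with hle | hle
    · rw [Nat.max_eq_left hle]; exact List.mem_cons_self
    · rw [Nat.max_eq_right hle] at h ⊢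
      exact List.mem_cons_of_mem _ (ih h)

lemma takeWhile_append_of_all {p : ℕ → Bool} {w : List ℕ}
    (hw : ∀ x ∈ w, p x = true) (u : List ℕ) :
    (w ++ u).takeWhile p = w ++ u.takeWhile p := by
  induction w with
  | nil => simp
  | cons a w ih =>
    simp only [List.cons_append, List.takeWhile_cons, hw a List.mem_cons_self]
    simp [ih fun x hx => hw x (List.mem_cons_of_mem _ hx)]

lemma diffRelAux_key : ∀ (n : ℕ) (u w : List ℕ), u.length < n →
    PosSeq u → PosSeq w → w ≠ [] → diffRelAux n u (w ++ u) := by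
  intro n
  induction n with
  | zero => intro u w h; omega
  | succ n ih =>
    intro u w hlen hu hw hwne
    have hM : maxR (w ++ u) = max (maxR w) (maxR u) := maxR_append w u
    obtain ⟨a, ha⟩ := List.exists_mem_of_ne_nil w hwne
    have hw1 : 1 ≤ maxR w := le_trans (hw a ha) (le_maxR ha)
    simp only [diffRelAux]
    by_cases hlt : maxR u < maxR (w ++ u)
    · exact Or.inl hlt
    · have hmeq : maxR u = maxR (w ++ u) := by omega
      have hm1 : 1 ≤ maxR u := by omega
      set m := maxR u with hm
      by_cases hmw : m ∈ w
      · refine Or.inr (Or.inl ⟨hmeq, ?_⟩)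
        rw [List.count_append, ← hmeq]
        have : 0 < w.count m := List.count_pos_iff.2 hmw
        omega
      · refine Or.inr (Or.inr ⟨hmeq, ?_, ?_⟩)
        · rw [List.count_append, ← hmeq, List.count_eq_zero.2 hmw]
          omega
        · have hall : ∀ x ∈ w, (decide (x ≠ maxR (w ++ u))) = true := by
            intro x hx
            simp only [decide_eq_true_eq]
            rintro rfl
            exact hmw (hmeq ▸ hx)
          have htw : (w ++ u).takeWhile (fun x => x ≠ maxR (w ++ u)) =
              w ++ u.takeWhile (fun x => x ≠ maxR u) := by
            rw [takeWhile_append_of_all hall, ← hmeq]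
          rw [htw]
          set ub := u.takeWhile (fun x => x ≠ maxR u) with hub
          rcases eq_or_ne ub [] with h0 | h0
          · exact Or.inl h0
          · refine Or.inr ?_
            have hsub : ub.Sublist u := List.takeWhile_sublist _
            have hmemu : m ∈ u := maxR_mem (by omega)
            have hmub : m ∉ ub := by
              intro hc
              have := List.mem_takeWhile_imp hc
              simp at this
              exact this hm
            have hne : ub ≠ u := fun h => hmub (h ▸ hmemu)
            have hltlen : ub.length < u.length :=
              lt_of_le_of_ne hsub.length_le (fun h => hne ((List.prefix_iff_eq_take.1
                (List.takeWhile_prefix _)).trans (by rw [h, List.take_length])))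
            exact ih ub w (by omega) (fun x hx => hu x (hsub.subset hx)) hw hwne

lemma diffRel0_key (u w : List ℕ) (hu : PosSeq u) (hw : PosSeq w) (hwne : w ≠ []) :
    diffRel0 u (w ++ u) :=
  diffRelAux_key _ u w (Nat.lt_succ_self _) hu hw hwne

lemma stripCP_self : ∀ s : List ℕ, stripCP s s = ([], []) := by
  intro s
  induction s with
  | nil => rfl
  | cons a s ih => simp [stripCP, ih]

lemma stripCP_spec : ∀ s t : List ℕ, ∃ k, k ≤ s.length ∧ k ≤ t.length ∧
    stripCP s t = (s.drop k, t.drop k) := by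
  intro s
  induction s with
  | nil => intro t; exact ⟨0, by simp [stripCP]⟩
  | cons a s ih =>
    intro t
    cases t with
    | nil => exact ⟨0, by simp [stripCP]⟩
    | cons b t =>
      by_cases h : a = b
      · obtain ⟨k, h1, h2, h4⟩ := ih t
        exact ⟨k + 1, by simpa using h1, by simpa using h2, by simp [stripCP, h, h4]⟩
      · exact ⟨0, by simp [stripCP, h]⟩

lemma diffRel_append (s s' : List ℕ) (hs : PosSeq s) (hs' : PosSeq s') :
    diffRel s (s' ++ s) := by
  rcases eq_or_ne s' [] with rfl | hne
  · simp only [List.nil_append, diffRel, stripCP_self]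
    simp [diffRel0, diffRelAux, maxR]
  · obtain ⟨k, hk1, hk2, heq⟩ := stripCP_spec s (s' ++ s)
    rw [diffRel, heq]
    have hsplit : s' ++ s = (s' ++ s.take k) ++ s.drop k := by simp
    have hvd : (s' ++ s).drop k = (s' ++ s.take k).drop k ++ s.drop k := by
      conv_lhs => rw [hsplit]
      rw [List.drop_append]
      have : k - (s' ++ s.take k).length = 0 := by
        simp only [List.length_append, List.length_take]
        omega
      rw [this, List.drop_zero]
    rw [hvd]
    apply diffRel0_key
    · intro x hx
      exact hs x (List.mem_of_mem_drop hx)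
    · intro x hx
      rcases List.mem_append.1 (List.mem_of_mem_drop hx) with h | h
      · exact hs' x h
      · exact hs x (List.mem_of_mem_take h)
    · intro hc
      have := congrArg List.length hc
      simp only [List.length_drop, List.length_append, List.length_take,
        List.length_nil] at this
      have : s'.length = 0 := by omega
      exact hne (List.length_eq_zero_iff.1 this)

/-- `▷_diff` satisfies the two properties characterizing
confluence of sequence rules. -/
theorem diffRel_confluence_properties :
    (∀ s s' : List ℕ, PosSeq s → PosSeq s' → Comparable s s' →
        ∀ x : ℕ, 1 ≤ x → (diffRel s s' ↔ diffRel (x :: s) (x :: s'))) ∧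
    (∀ s s' : List ℕ, PosSeq s → PosSeq s' → Comparable s (s' ++ s) →
        diffRel s (s' ++ s)) := by
  constructor
  · intro s s' _ _ _ x _
    simp [diffRel, stripCP]
  · intro s s' hs hs' _
    exact diffRel_append s s' hs hs'

end RankedDelegation
end
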